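/- arXiv:0904.3871 — 8 statements merged into one kernel-verified Lean document; each statement's English description precedes it below -/
import Mathlib

section
/- Let ψ : [−1,∞) → ℝ be continuous and convex with ψ(0) = 0 and ψ(θ) → ∞ as θ → ∞, let α, β, K > 0, and let Φ(q) = sup{θ ≥ 0 : ψ(θ) = q} for q > 0. Then for every q with max(β + ψ(−1), 0) < q ≤ α/K one has a*(q) := α(Φ(q)+1)/(Φ(q)(q − ψ(−1) − β)) > K; in particular q·(Φ(q)+1) ≥ Φ(q)(q − ψ(−1)) holds for all q > 0, and the unique root q₀ of a*(q₀) = K satisfies q₀ > α/K. -/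
/-!
Convexity of `ψ` along `-1 < 0 < Φ q` gives the chord inequality `-ψ (-1) ≤ ψ (Φ q) / Φ q = q / Φ q`,
that is `Φ q * (q - ψ (-1)) ≤ q * (Φ q + 1)`. Multiplying by `K` and using `q K ≤ α`,
`K Φ (q - ψ (-1) - β) ≤ K q (Φ + 1) - K Φ β < α (Φ + 1)`, so `a* q > K` for `q ≤ α / K`; hence the
root `q₀` of `a* q₀ = K` lies beyond `α / K`. Continuity and `ψ → ∞` make the level set of `q`
nonempty, closed and bounded, so `Φ q` is a genuine root, positive because `ψ 0 = 0 < q`.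
-/

open Set Filter

section LevelSet

variable {f : ℝ → ℝ} {q : ℝ}

lemma bddAbove_levelSet_of_tendsto_atTop (htop : Tendsto f atTop atTop) :
    BddAbove {θ | 0 ≤ θ ∧ f θ = q} := by
  obtain ⟨T, hT⟩ := (htop.eventually (eventually_gt_atTop q)).exists_forall_of_atTop
  refine ⟨T, fun θ hθ => ?_⟩
  by_contra! hTθ
  exact (hT θ hTθ.le).ne' hθ.2

lemma nonempty_levelSet_of_tendsto_atTop (hcont : ContinuousOn f (Ici 0)) (h0 : f 0 ≤ q)
    (htop : Tendsto f atTop atTop) : {θ | 0 ≤ θ ∧ f θ = q}.Nonempty := by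
  obtain ⟨T, hT⟩ := (htop.eventually (eventually_ge_atTop q)).exists_forall_of_atTop
  have hT₀ : (0 : ℝ) ≤ max T 0 := le_max_right T 0
  obtain ⟨θ, hθ, hθq⟩ := intermediate_value_Icc hT₀ (hcont.mono Icc_subset_Ici_self)
    ⟨h0, hT _ (le_max_left T 0)⟩
  exact ⟨θ, hθ.1, hθq⟩

lemma isClosed_levelSet (hcont : ContinuousOn f (Ici 0)) : IsClosed {θ | 0 ≤ θ ∧ f θ = q} :=
  hcont.preimage_isClosed_of_isClosed isClosed_Ici isClosed_singleton

lemma sSup_levelSet_mem (hcont : ContinuousOn f (Ici 0)) (h0 : f 0 ≤ q)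
    (htop : Tendsto f atTop atTop) :
    sSup {θ | 0 ≤ θ ∧ f θ = q} ∈ {θ | 0 ≤ θ ∧ f θ = q} :=
  (isClosed_levelSet hcont).csSup_mem (nonempty_levelSet_of_tendsto_atTop hcont h0 htop)
    (bddAbove_levelSet_of_tendsto_atTop htop)

lemma sSup_levelSet_pos (hcont : ContinuousOn f (Ici 0)) (h0 : f 0 = 0) (hq : 0 < q)
    (htop : Tendsto f atTop atTop) : 0 < sSup {θ | 0 ≤ θ ∧ f θ = q} := by
  obtain ⟨hnonneg, hroot⟩ := sSup_levelSet_mem hcont (h0.trans_le hq.le) htop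
  refine hnonneg.lt_of_ne fun hzero => hq.ne ?_
  rw [← hroot, ← hzero, h0]

end LevelSet

/-- The chord inequality `-f (-1) ≤ f θ / θ`, multiplied out. -/
lemma ConvexOn.mul_sub_le_mul_add_one {f : ℝ → ℝ} (hconv : ConvexOn ℝ (Ici (-1)) f)
    (h0 : f 0 = 0) {θ : ℝ} (hθ : 0 < θ) : θ * (f θ - f (-1)) ≤ f θ * (θ + 1) := by
  have hslope := hconv.slope_mono_adjacent (x := -1) (y := 0) self_mem_Ici
    (mem_Ici.mpr (by linarith)) (by norm_num) hθ
  rw [h0, sub_zero, zero_sub, sub_neg_eq_add, zero_add, div_one, sub_zero, le_div_iff₀ hθ] at hslope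
  linarith

lemma lt_mul_add_one_div_of_mul_sub_le {α β K θ c q : ℝ} (hβ : 0 < β) (hK : 0 < K)
    (hθ : 0 < θ) (hq : β + c < q) (hqK : q ≤ α / K) (hchord : θ * (q - c) ≤ q * (θ + 1)) :
    K < α * (θ + 1) / (θ * (q - c - β)) := by
  have hden : 0 < θ * (q - c - β) := mul_pos hθ (by linarith)
  have hqK' : q * K ≤ α := (le_div_iff₀ hK).mp hqK
  rw [lt_div_iff₀ hden]
  calc K * (θ * (q - c - β)) = K * (θ * (q - c)) - K * θ * β := by ring
    _ < K * (q * (θ + 1)) := by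
      linarith [mul_le_mul_of_nonneg_left hchord hK.le, mul_pos (mul_pos hK hθ) hβ]
    _ = (q * K) * (θ + 1) := by ring
    _ ≤ α * (θ + 1) := mul_le_mul_of_nonneg_right hqK' (by linarith)

theorem stmt_7_general (ψ : ℝ → ℝ)
    (hcont : ContinuousOn ψ (Set.Ici (-1:ℝ)))
    (hconv : ConvexOn ℝ (Set.Ici (-1:ℝ)) ψ)
    (h0 : ψ 0 = 0)
    (htop : Tendsto ψ atTop atTop)
    (α β K : ℝ) (hβ : 0 < β) (hK : 0 < K)
    (Φ astar : ℝ → ℝ)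
    (hΦ : ∀ q : ℝ, Φ q = sSup {θ : ℝ | 0 ≤ θ ∧ ψ θ = q})
    (hastar : ∀ q : ℝ, astar q = α * (Φ q + 1) / (Φ q * (q - ψ (-1) - β))) :
    (∀ q : ℝ, max (β + ψ (-1)) 0 < q → q ≤ α / K → K < astar q) ∧
    (∀ q : ℝ, 0 < q → Φ q * (q - ψ (-1)) ≤ q * (Φ q + 1)) ∧
    (∀ q₀ : ℝ, q₀ ∈ Set.Ioi (max (β + ψ (-1)) 0) → astar q₀ = K → α / K < q₀) := by
  have hcont₀ : ContinuousOn ψ (Ici 0) := hcont.mono (Ici_subset_Ici.mpr (by norm_num))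
  have hΦ_pos : ∀ q, 0 < q → 0 < Φ q := fun q hq =>
    (hΦ q).symm ▸ sSup_levelSet_pos hcont₀ h0 hq htop
  have hΦ_root : ∀ q, 0 < q → ψ (Φ q) = q := fun q hq =>
    (hΦ q).symm ▸ (sSup_levelSet_mem hcont₀ (h0.trans_le hq.le) htop).2
  have hchord : ∀ q, 0 < q → Φ q * (q - ψ (-1)) ≤ q * (Φ q + 1) := fun q hq => by
    simpa only [hΦ_root q hq] using hconv.mul_sub_le_mul_add_one h0 (hΦ_pos q hq)
  have hbound : ∀ q, max (β + ψ (-1)) 0 < q → q ≤ α / K → K < astar q := by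
    intro q hq hqK
    have hq₀ : 0 < q := (le_max_right _ _).trans_lt hq
    rw [hastar q]
    exact lt_mul_add_one_div_of_mul_sub_le hβ hK (hΦ_pos q hq₀)
      ((le_max_left _ _).trans_lt hq) hqK (hchord q hq₀)
  refine ⟨hbound, hchord, fun q₀ hq₀ hroot => ?_⟩
  by_contra! hle
  exact (hbound q₀ hq₀ hle).ne' hroot

/-- For max(β+ψ(−1),0) < q ≤ α/K one has a*(q) > K; the inequality
q(Φ(q)+1) ≥ Φ(q)(q − ψ(−1)) holds for all q > 0; and any root q₀ of a*(q₀) = K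
in (max(β+ψ(−1),0), ∞) satisfies q₀ > α/K. -/
theorem stmt_7 (ψ : ℝ → ℝ)
    (hcont : ContinuousOn ψ (Set.Ici (-1:ℝ)))
    (hconv : ConvexOn ℝ (Set.Ici (-1:ℝ)) ψ)
    (h0 : ψ 0 = 0)
    (htop : Tendsto ψ atTop atTop)
    (α β K : ℝ) (hα : 0 < α) (hβ : 0 < β) (hK : 0 < K)
    (Φ astar : ℝ → ℝ)
    (hΦ : ∀ q : ℝ, Φ q = sSup {θ : ℝ | 0 ≤ θ ∧ ψ θ = q})
    (hastar : ∀ q : ℝ, astar q = α * (Φ q + 1) / (Φ q * (q - ψ (-1) - β))) :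
    (∀ q : ℝ, max (β + ψ (-1)) 0 < q → q ≤ α / K → K < astar q) ∧
    (∀ q : ℝ, 0 < q → Φ q * (q - ψ (-1)) ≤ q * (Φ q + 1)) ∧
    (∀ q₀ : ℝ, q₀ ∈ Set.Ioi (max (β + ψ (-1)) 0) → astar q₀ = K → α / K < q₀) :=
  stmt_7_general ψ hcont hconv h0 htop α β K hβ hK Φ astar hΦ hastar
end

section
/- Let Π be a measure on ℝ concentrated on (0,∞) satisfying ∫_{(0,∞)} min(1, x²) Π(dx) < ∞ and ∫_{[1,∞)} e^{x} Π(dx) < ∞, and let φ > 0. Then the function f(z) = e^z(1 − e^{−(φ+1)z})/(φ+1) − (1 − e^{−φz})/φ is Π-integrable: ∫_{(0,∞)} f(z) Π(dz) < ∞. -/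
/-!
Write `f z = (φ e^z + e^{-φz} - (φ+1)) / (φ(φ+1))`. Then `e^x ≥ 1 + x` makes `f ≥ 0`, the
second-order bound `e^x ≤ 1 + x + x²` (valid for `x ≤ 1`) at `x = z` and `x = -φz` gives
`f z ≤ z²` on `[0, 1]`, and `e^{-φz} ≤ 1` gives `f z ≤ e^z` on `[0, ∞)`. So
`f ≤ min(1, z²) + 1_{[1,∞)} e^z` on `(0, ∞)`, and both terms are `ν`-integrable there by
assumption.
-/

open MeasureTheory Real Set

lemma Real.exp_le_one_add_add_sq {x : ℝ} (hx : x ≤ 1) : exp x ≤ 1 + x + x ^ 2 := by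
  rcases le_or_gt (-1) x with hx' | hx'
  · have h := abs_le.1 (abs_exp_sub_one_sub_id_le (abs_le.2 ⟨hx', hx⟩))
    linarith [h.2]
  · nlinarith [exp_le_one_iff.2 (by linarith : x ≤ 0)]

lemma setLIntegral_Ioi_ofReal_lt_top_of_le_sq_of_le (ν : Measure ℝ) {g h : ℝ → ℝ}
    (hlevy : ∫⁻ x in Ioi (0:ℝ), ENNReal.ofReal (min 1 (x ^ 2)) ∂ν < ⊤)
    (hh : ∫⁻ x in Ici (1:ℝ), ENNReal.ofReal (h x) ∂ν < ⊤)
    (hg_small : ∀ x ∈ Ioo (0:ℝ) 1, g x ≤ x ^ 2) (hg_large : ∀ x ∈ Ici (1:ℝ), g x ≤ h x) :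
    ∫⁻ x in Ioi (0:ℝ), ENNReal.ofReal (g x) ∂ν < ⊤ := by
  set H : ℝ → ENNReal := (Ici (1:ℝ)).indicator fun x ↦ ENNReal.ofReal (h x)
  have hbound : ∀ x ∈ Ioi (0:ℝ), ENNReal.ofReal (g x) ≤ ENNReal.ofReal (min 1 (x ^ 2)) + H x := by
    intro x hx
    rcases lt_or_ge x 1 with hx1 | hx1
    · have hmin : min 1 (x ^ 2) = x ^ 2 := min_eq_right (by nlinarith [mem_Ioi.1 hx])
      rw [hmin]
      exact (ENNReal.ofReal_le_ofReal (hg_small x ⟨hx, hx1⟩)).trans le_self_add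
    · calc ENNReal.ofReal (g x) ≤ ENNReal.ofReal (h x) := ENNReal.ofReal_le_ofReal (hg_large x hx1)
        _ = H x := (indicator_of_mem (mem_Ici.2 hx1) fun x ↦ ENNReal.ofReal (h x)).symm
        _ ≤ _ := le_add_self
  have hH : ∫⁻ x in Ioi (0:ℝ), H x ∂ν < ⊤ := calc
    ∫⁻ x in Ioi (0:ℝ), H x ∂ν ≤ ∫⁻ x, H x ∂ν := setLIntegral_le_lintegral _ _
    _ = ∫⁻ x in Ici (1:ℝ), ENNReal.ofReal (h x) ∂ν := lintegral_indicator measurableSet_Ici _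
    _ < ⊤ := hh
  calc ∫⁻ x in Ioi (0:ℝ), ENNReal.ofReal (g x) ∂ν
      ≤ ∫⁻ x in Ioi (0:ℝ), ENNReal.ofReal (min 1 (x ^ 2)) + H x ∂ν :=
        setLIntegral_mono' measurableSet_Ioi hbound
    _ < ⊤ := by
        rw [lintegral_add_left (by fun_prop)]
        exact ENNReal.add_lt_top.2 ⟨hlevy, hH⟩

namespace LevyExponent

noncomputable def tiltIntegrand (φ z : ℝ) : ℝ :=
  exp z * (1 - exp (-(φ + 1) * z)) / (φ + 1) - (1 - exp (-φ * z)) / φ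

variable {φ : ℝ}

lemma tiltIntegrand_eq (hφ : 0 < φ) (z : ℝ) :
    tiltIntegrand φ z = (φ * exp z + exp (-φ * z) - (φ + 1)) / (φ * (φ + 1)) := by
  have hsplit : exp (-(φ + 1) * z) = exp (-φ * z) / exp z := by
    rw [eq_div_iff (exp_ne_zero _), ← exp_add]
    ring_nf
  rw [tiltIntegrand, hsplit]
  field_simp
  ring

lemma continuous_tiltIntegrand (φ : ℝ) : Continuous (tiltIntegrand φ) := by
  unfold tiltIntegrand
  fun_prop

lemma tiltIntegrand_nonneg (hφ : 0 < φ) (z : ℝ) : 0 ≤ tiltIntegrand φ z := by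
  rw [tiltIntegrand_eq hφ]
  apply div_nonneg _ (by positivity)
  nlinarith [add_one_le_exp z, add_one_le_exp (-φ * z)]

lemma tiltIntegrand_le_sq (hφ : 0 < φ) {z : ℝ} (hz : 0 ≤ z) (hz1 : z ≤ 1) :
    tiltIntegrand φ z ≤ z ^ 2 := by
  have hφz : 0 ≤ φ * z := by positivity
  have h₁ := exp_le_one_add_add_sq hz1
  have h₂ := exp_le_one_add_add_sq (by nlinarith : -φ * z ≤ 1)
  rw [tiltIntegrand_eq hφ, div_le_iff₀ (by positivity)]
  nlinarith

lemma tiltIntegrand_le_exp (hφ : 0 < φ) {z : ℝ} (hz : 0 ≤ z) : tiltIntegrand φ z ≤ exp z := by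
  have h : exp (-φ * z) ≤ 1 := exp_le_one_iff.2 (by nlinarith)
  rw [tiltIntegrand_eq hφ, div_le_iff₀ (by positivity)]
  nlinarith [mul_pos (mul_pos hφ hφ) (exp_pos z)]

end LevyExponent

open LevyExponent in
theorem stmt_10_general (ν : Measure ℝ)
    (hlevy : ∫⁻ x in Set.Ioi (0:ℝ), ENNReal.ofReal (min 1 (x ^ 2)) ∂ν < ⊤)
    (hexp : ∫⁻ x in Set.Ici (1:ℝ), ENNReal.ofReal (Real.exp x) ∂ν < ⊤)
    (φ : ℝ) (hφ : 0 < φ) (f : ℝ → ℝ)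
    (hf : ∀ z : ℝ, f z =
      Real.exp z * (1 - Real.exp (-(φ + 1) * z)) / (φ + 1)
        - (1 - Real.exp (-φ * z)) / φ) :
    MeasureTheory.IntegrableOn f (Set.Ioi (0:ℝ)) ν ∧
    ∫⁻ z in Set.Ioi (0:ℝ), ENNReal.ofReal (f z) ∂ν < ⊤ := by
  obtain rfl : f = tiltIntegrand φ := funext hf
  have hlint : ∫⁻ z in Ioi (0:ℝ), ENNReal.ofReal (tiltIntegrand φ z) ∂ν < ⊤ :=
    setLIntegral_Ioi_ofReal_lt_top_of_le_sq_of_le ν hlevy hexp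
      (fun z hz ↦ tiltIntegrand_le_sq hφ hz.1.le hz.2.le)
      (fun z hz ↦ tiltIntegrand_le_exp hφ (zero_le_one.trans hz))
  have hnonneg : 0 ≤ᵐ[ν.restrict (Ioi 0)] tiltIntegrand φ := ae_of_all _ (tiltIntegrand_nonneg hφ)
  exact ⟨⟨(continuous_tiltIntegrand φ).aestronglyMeasurable,
    (hasFiniteIntegral_iff_ofReal hnonneg).2 hlint⟩, hlint⟩

/-- For a Lévy measure Π concentrated on (0,∞) with
∫ min(1,x²) dΠ < ∞ and ∫_{[1,∞)} e^x dΠ < ∞, the function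
f(z) = e^z(1−e^{−(φ+1)z})/(φ+1) − (1−e^{−φz})/φ is Π-integrable on (0,∞). -/
theorem stmt_10 (ν : Measure ℝ)
    (hconc : ν (Set.Ioi (0:ℝ))ᶜ = 0)
    (hlevy : ∫⁻ x in Set.Ioi (0:ℝ), ENNReal.ofReal (min 1 (x ^ 2)) ∂ν < ⊤)
    (hexp : ∫⁻ x in Set.Ici (1:ℝ), ENNReal.ofReal (Real.exp x) ∂ν < ⊤)
    (φ : ℝ) (hφ : 0 < φ) (f : ℝ → ℝ)
    (hf : ∀ z : ℝ, f z =
      Real.exp z * (1 - Real.exp (-(φ + 1) * z)) / (φ + 1)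
        - (1 - Real.exp (-φ * z)) / φ) :
    MeasureTheory.IntegrableOn f (Set.Ioi (0:ℝ)) ν ∧
    ∫⁻ z in Set.Ioi (0:ℝ), ENNReal.ofReal (f z) ∂ν < ⊤ :=
  stmt_10_general ν hlevy hexp φ hφ f hf
end

section
/- Let Π be a measure on ℝ concentrated on (0,∞) satisfying ∫_{(0,∞)} min(1, x²) Π(dx) < ∞ and ∫_{[1,∞)} e^{x} Π(dx) < ∞, let μ ∈ ℝ, b ≥ 0, and let ψ(θ) = μθ + (b²/2)θ² + ∫_{(0,∞)} (e^{−θx} − 1 + θx·1_{{x<1}}) Π(dx). Then for every φ > 0, with f(z) = e^z(1 − e^{−(φ+1)z})/(φ+1) − (1 − e^{−φz})/φ and q = ψ(φ), one has ∫_{(0,∞)} f(z) Π(dz) = (ψ(−1) + μ − b²/2)/(φ+1) + (q − μφ − b²φ²/2)/(φ(φ+1)). -/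
/-!
Writing `k θ x = e^{-θx} - 1 + θ x 1_{x<1}` (`levyKernel`) for the integrand of the Laplace
exponent, one has the pointwise identity `f = k (-1) / (φ + 1) + k φ / (φ (φ + 1))`: the
compensating terms cancel since `-1/(φ+1) + φ/(φ(φ+1)) = 0`. Both `k (-1)` and `k φ` are
`Π`-integrable (near `0` they are `O(x²)`, near `∞` they are `O(e^x)`), so integrating the identity
and solving the defining equations of `ψ(-1)` and `ψ(φ)` for the integrals gives the closed form.
-/

open MeasureTheory Real Set

noncomputable def levyKernel (θ x : ℝ) : ℝ := exp (-θ * x) - 1 + θ * (if x < 1 then x else 0)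

theorem abs_exp_sub_one_sub_id_le_of_le_one {u : ℝ} (hu : u ≤ 1) : |exp u - 1 - u| ≤ u ^ 2 := by
  rcases le_or_gt (-1) u with h | h
  · exact abs_exp_sub_one_sub_id_le (abs_le.2 ⟨h, hu⟩)
  · have h1 : exp u ≤ 1 := exp_le_one_iff.2 (by linarith)
    rw [abs_of_nonneg (by linarith [add_one_le_exp u])]
    nlinarith

theorem abs_levyKernel_le {θ x : ℝ} (hθ : -1 ≤ θ) (hx : 0 < x) :
    |levyKernel θ x| ≤ (1 + θ ^ 2) * min 1 (x ^ 2) + (Ici 1).indicator exp x := by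
  unfold levyKernel
  rcases lt_or_ge x 1 with hx1 | hx1
  · have hu : -θ * x ≤ 1 := by nlinarith
    have hk : exp (-θ * x) - 1 + θ * x = exp (-θ * x) - 1 - (-θ * x) := by ring
    rw [if_pos hx1, indicator_of_notMem (notMem_Ici.2 hx1), min_eq_right (by nlinarith), hk]
    calc |exp (-θ * x) - 1 - (-θ * x)| ≤ (-θ * x) ^ 2 := abs_exp_sub_one_sub_id_le_of_le_one hu
      _ ≤ (1 + θ ^ 2) * x ^ 2 + 0 := by nlinarith [sq_nonneg x]
  · have he : exp (-θ * x) ≤ exp x := exp_le_exp.2 (by nlinarith)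
    rw [if_neg (not_lt.2 hx1), indicator_of_mem (mem_Ici.2 hx1), min_eq_left (by nlinarith),
      mul_zero, add_zero, abs_le]
    constructor <;> nlinarith [exp_pos (-θ * x), sq_nonneg θ]

theorem integrableOn_levyKernel {ν : Measure ℝ}
    (hlevy : ∫⁻ x in Ioi 0, ENNReal.ofReal (min 1 (x ^ 2)) ∂ν < ⊤)
    (hexp : ∫⁻ x in Ici 1, ENNReal.ofReal (exp x) ∂ν < ⊤) {θ : ℝ} (hθ : -1 ≤ θ) :
    IntegrableOn (levyKernel θ) (Ioi 0) ν := by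
  have hmin : IntegrableOn (fun x : ℝ => min 1 (x ^ 2)) (Ioi 0) ν :=
    ⟨(continuous_const.min (continuous_pow 2)).aestronglyMeasurable,
      (hasFiniteIntegral_iff_ofReal (ae_of_all _ fun x => by positivity)).2 hlevy⟩
  have hexpOn : IntegrableOn exp (Ici 1) ν :=
    ⟨continuous_exp.aestronglyMeasurable,
      (hasFiniteIntegral_iff_ofReal (ae_of_all _ fun x => (exp_pos x).le)).2 hexp⟩
  have hind : IntegrableOn ((Ici 1).indicator exp) (Ioi 0) ν :=
    ((integrable_indicator_iff measurableSet_Ici).2 hexpOn).integrableOn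
  refine (hmin.const_mul (1 + θ ^ 2)).add hind |>.mono' ?_ ?_
  · refine Measurable.aestronglyMeasurable ?_
    unfold levyKernel
    have hcut : Measurable fun x : ℝ => if x < 1 then x else 0 :=
      Measurable.ite measurableSet_Iio measurable_id measurable_const
    fun_prop
  · filter_upwards [ae_restrict_mem measurableSet_Ioi] with x hx
    exact abs_levyKernel_le hθ hx

theorem exp_mul_one_sub_exp_div_sub_eq_levyKernel {φ : ℝ} (hφ : φ ≠ 0) (hφ1 : φ + 1 ≠ 0)
    (z : ℝ) :
    exp z * (1 - exp (-(φ + 1) * z)) / (φ + 1) - (1 - exp (-φ * z)) / φ =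
      levyKernel (-1) z / (φ + 1) + levyKernel φ z / (φ * (φ + 1)) := by
  have hsplit : exp (-(φ + 1) * z) = exp (-φ * z) / exp z := by
    rw [eq_div_iff (exp_ne_zero z), ← exp_add]; ring_nf
  unfold levyKernel
  rw [hsplit, neg_neg, one_mul]
  generalize (if z < 1 then z else 0) = t
  field_simp
  ring

theorem stmt_11_general (ν : Measure ℝ)
    (hlevy : ∫⁻ x in Set.Ioi (0:ℝ), ENNReal.ofReal (min 1 (x ^ 2)) ∂ν < ⊤)
    (hexp : ∫⁻ x in Set.Ici (1:ℝ), ENNReal.ofReal (Real.exp x) ∂ν < ⊤)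
    (μ b : ℝ)
    (ψ : ℝ → ℝ)
    (hψ : ∀ θ : ℝ, -1 ≤ θ →
      ψ θ = μ * θ + b ^ 2 / 2 * θ ^ 2 +
        ∫ x in Set.Ioi (0:ℝ),
          (Real.exp (-θ * x) - 1 + θ * (if x < 1 then x else 0)) ∂ν)
    (φ : ℝ) (hφ : 0 < φ) (f : ℝ → ℝ)
    (hf : ∀ z : ℝ, f z =
      Real.exp z * (1 - Real.exp (-(φ + 1) * z)) / (φ + 1)
        - (1 - Real.exp (-φ * z)) / φ) :
    ∫ z in Set.Ioi (0:ℝ), f z ∂ν =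
      (ψ (-1) + μ - b ^ 2 / 2) / (φ + 1)
        + (ψ φ - μ * φ - b ^ 2 * φ ^ 2 / 2) / (φ * (φ + 1)) := by
  have hψ' (θ : ℝ) (hθ : -1 ≤ θ) :
      ψ θ = μ * θ + b ^ 2 / 2 * θ ^ 2 + ∫ x in Ioi 0, levyKernel θ x ∂ν := hψ θ hθ
  have hf' : f = fun z => levyKernel (-1) z / (φ + 1) + levyKernel φ z / (φ * (φ + 1)) :=
    funext fun z => (hf z).trans (exp_mul_one_sub_exp_div_sub_eq_levyKernel hφ.ne' (by positivity) z)
  rw [hf', integral_add ((integrableOn_levyKernel hlevy hexp le_rfl).div_const _)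
      ((integrableOn_levyKernel hlevy hexp (by linarith)).div_const _),
    integral_div, integral_div, hψ' (-1) le_rfl, hψ' φ (by linarith)]
  field_simp
  ring

/-- Closed form for ∫_{(0,∞)} f dΠ in terms of the Laplace
exponent ψ: with q = ψ(φ),
∫ f dΠ = (ψ(−1) + μ − b²/2)/(φ+1) + (q − μφ − b²φ²/2)/(φ(φ+1)). -/
theorem stmt_11 (ν : Measure ℝ)
    (hconc : ν (Set.Ioi (0:ℝ))ᶜ = 0)
    (hlevy : ∫⁻ x in Set.Ioi (0:ℝ), ENNReal.ofReal (min 1 (x ^ 2)) ∂ν < ⊤)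
    (hexp : ∫⁻ x in Set.Ici (1:ℝ), ENNReal.ofReal (Real.exp x) ∂ν < ⊤)
    (μ b : ℝ) (hb : 0 ≤ b)
    (ψ : ℝ → ℝ)
    (hψ : ∀ θ : ℝ, -1 ≤ θ →
      ψ θ = μ * θ + b ^ 2 / 2 * θ ^ 2 +
        ∫ x in Set.Ioi (0:ℝ),
          (Real.exp (-θ * x) - 1 + θ * (if x < 1 then x else 0)) ∂ν)
    (φ : ℝ) (hφ : 0 < φ) (f : ℝ → ℝ)
    (hf : ∀ z : ℝ, f z =
      Real.exp z * (1 - Real.exp (-(φ + 1) * z)) / (φ + 1)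
        - (1 - Real.exp (-φ * z)) / φ) :
    ∫ z in Set.Ioi (0:ℝ), f z ∂ν =
      (ψ (-1) + μ - b ^ 2 / 2) / (φ + 1)
        + (ψ φ - μ * φ - b ^ 2 * φ ^ 2 / 2) / (φ * (φ + 1)) :=
  stmt_11_general ν hlevy hexp μ b ψ hψ φ hφ f hf
end

section
/- Let Π be a measure on ℝ concentrated on (0,∞) satisfying ∫_{(0,∞)} min(1, x²) Π(dx) < ∞ and ∫_{[1,∞)} e^{x} Π(dx) < ∞, let φ > 0 and K > 0, and define J(c) = ∫_{(log K − c, ∞)} f(x − (log K − c)) Π(dx) for c ≤ log K, where f(z) = e^z(1 − e^{−(φ+1)z})/(φ+1) − (1 − e^{−φz})/φ. Then J is finite, nondecreasing and continuous on (−∞, log K), J(c) → 0 as c → −∞, and J(c) → ∫_{(0,∞)} f(z) Π(dz) as c ↑ log K. -/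
open MeasureTheory Real Set Filter Topology

/-!
With `a = log K - c ≥ 0`, the integrand of `J c` is `x ↦ f (max (x - a) 0)` on all of `ℝ`. Since
`f 0 = 0`, this is jointly continuous in `(a, x)`, even at `x = a`, where `ν` may have an atom;
since `f` is increasing on `[0, ∞)`, it decreases in `a` and is dominated by its value at `a = 0`.
Dominated convergence then gives every claim, as soon as `f` is `ν`-integrable on `(0, ∞)`. That
follows from the Lévy conditions, because `f z ≤ z² eᶻ` near `0` (mean value theorem, with
`f' z = (eᶻ - e^{-φz}) / (φ + 1) ≤ z eᶻ`) and `f z ≤ eᶻ` everywhere on `[0, ∞)`.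
-/

section ShiftedIntegral

variable {ν : Measure ℝ} {f : ℝ → ℝ}

lemma comp_max_sub_zero_eq_indicator (hf0 : f 0 = 0) (a x : ℝ) :
    f (max (x - a) 0) = (Ioi a).indicator (fun y => f (y - a)) x := by
  by_cases hx : a < x
  · rw [indicator_of_mem (show x ∈ Ioi a from hx), max_eq_left (sub_nonneg.2 hx.le)]
  · rw [indicator_of_notMem (show x ∉ Ioi a from hx), max_eq_right (by linarith), hf0]

lemma setIntegral_Ioi_comp_sub (hf0 : f 0 = 0) (a : ℝ) :
    ∫ x in Ioi a, f (x - a) ∂ν = ∫ x, f (max (x - a) 0) ∂ν := by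
  simp_rw [comp_max_sub_zero_eq_indicator hf0, integral_indicator measurableSet_Ioi]

lemma integrableOn_Ioi_comp_sub_iff (hf0 : f 0 = 0) (a : ℝ) :
    IntegrableOn (fun x => f (x - a)) (Ioi a) ν ↔ Integrable (fun x => f (max (x - a) 0)) ν := by
  simp_rw [comp_max_sub_zero_eq_indicator hf0, integrable_indicator_iff measurableSet_Ioi]

lemma norm_comp_max_sub_zero_le (hmono : MonotoneOn f (Ici 0)) (hf0 : f 0 = 0) {a : ℝ}
    (ha : 0 ≤ a) (x : ℝ) : ‖f (max (x - a) 0)‖ ≤ f (max x 0) := by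
  have hnonneg : 0 ≤ f (max (x - a) 0) := by
    simpa [hf0] using hmono (mem_Ici.2 le_rfl) (le_max_right (x - a) 0) (le_max_right (x - a) 0)
  rw [Real.norm_of_nonneg hnonneg]
  exact hmono (le_max_right (x - a) 0) (le_max_right x 0) (max_le_max (by linarith) le_rfl)

lemma integrable_comp_max_sub_zero (hfc : Continuous f) (hmono : MonotoneOn f (Ici 0))
    (hf0 : f 0 = 0) (hint : IntegrableOn f (Ioi 0) ν) {a : ℝ} (ha : 0 ≤ a) :
    Integrable (fun x => f (max (x - a) 0)) ν := by
  have hint₀ : Integrable (fun x => f (max x 0)) ν := by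
    simpa using (integrableOn_Ioi_comp_sub_iff (ν := ν) hf0 0).1 (by simpa using hint)
  exact hint₀.mono' (by fun_prop) (ae_of_all _ (norm_comp_max_sub_zero_le hmono hf0 ha))

lemma continuousOn_integral_comp_max_sub_zero (hfc : Continuous f)
    (hmono : MonotoneOn f (Ici 0)) (hf0 : f 0 = 0) (hint : IntegrableOn f (Ioi 0) ν) :
    ContinuousOn (fun a => ∫ x, f (max (x - a) 0) ∂ν) (Ici 0) :=
  continuousOn_of_dominated (fun _ _ => by fun_prop)
    (fun _ ha => ae_of_all _ (norm_comp_max_sub_zero_le hmono hf0 ha))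
    (integrable_comp_max_sub_zero hfc hmono hf0 hint le_rfl |>.congr (by simp))
    (ae_of_all _ fun _ => by fun_prop)

lemma antitoneOn_integral_comp_max_sub_zero (hfc : Continuous f)
    (hmono : MonotoneOn f (Ici 0)) (hf0 : f 0 = 0) (hint : IntegrableOn f (Ioi 0) ν) :
    AntitoneOn (fun a => ∫ x, f (max (x - a) 0) ∂ν) (Ici 0) := fun a ha b hb hab =>
  integral_mono (integrable_comp_max_sub_zero hfc hmono hf0 hint hb)
    (integrable_comp_max_sub_zero hfc hmono hf0 hint ha)
    fun x => hmono (le_max_right (x - b) 0) (le_max_right (x - a) 0)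
      (max_le_max (by linarith) le_rfl)

lemma tendsto_integral_comp_max_sub_zero_atTop (hfc : Continuous f)
    (hmono : MonotoneOn f (Ici 0)) (hf0 : f 0 = 0) (hint : IntegrableOn f (Ioi 0) ν) :
    Tendsto (fun a => ∫ x, f (max (x - a) 0) ∂ν) atTop (𝓝 0) := by
  have hvanish (x : ℝ) : ∀ᶠ a in atTop, f (max (x - a) 0) = 0 := by
    filter_upwards [eventually_ge_atTop x] with a ha
    rw [max_eq_right (by linarith), hf0]
  simpa using tendsto_integral_filter_of_dominated_convergence (μ := ν) (f := fun _ => 0) _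
    (.of_forall fun _ => by fun_prop)
    ((eventually_ge_atTop 0).mono fun _ ha => ae_of_all _ (norm_comp_max_sub_zero_le hmono hf0 ha))
    (integrable_comp_max_sub_zero hfc hmono hf0 hint le_rfl |>.congr (by simp))
    (ae_of_all _ fun x => tendsto_const_nhds.congr' ((hvanish x).mono fun _ h => h.symm))

end ShiftedIntegral

section JumpKernel

variable {φ : ℝ}

noncomputable def jumpKernel (φ z : ℝ) : ℝ :=
  exp z * (1 - exp (-(φ + 1) * z)) / (φ + 1) - (1 - exp (-φ * z)) / φ

lemma jumpKernel_eq (φ z : ℝ) :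
    jumpKernel φ z = (exp z - exp (-φ * z)) / (φ + 1) - (1 - exp (-φ * z)) / φ := by
  rw [jumpKernel, mul_sub, mul_one, ← exp_add]
  ring_nf

@[simp] lemma jumpKernel_zero (φ : ℝ) : jumpKernel φ 0 = 0 := by simp [jumpKernel]

@[fun_prop] lemma continuous_jumpKernel (φ : ℝ) : Continuous (jumpKernel φ) := by
  unfold jumpKernel; fun_prop

lemma hasDerivAt_jumpKernel (hφ : 0 < φ) (z : ℝ) :
    HasDerivAt (jumpKernel φ) ((exp z - exp (-φ * z)) / (φ + 1)) z := by
  have hexp : HasDerivAt (fun z => exp (-φ * z)) (exp (-φ * z) * -φ) z := by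
    simpa using ((hasDerivAt_id z).const_mul (-φ)).exp
  rw [funext (jumpKernel_eq φ)]
  refine ((((hasDerivAt_exp z).sub hexp).div_const (φ + 1)).sub
    (((hasDerivAt_const z 1).sub hexp).div_const φ)).congr_deriv ?_
  field_simp
  ring

lemma deriv_jumpKernel_le (hφ : 0 < φ + 1) (t : ℝ) :
    (exp t - exp (-φ * t)) / (φ + 1) ≤ t * exp t := by
  have hmul : exp (-φ * t) = exp t * exp (-((φ + 1) * t)) := by rw [← exp_add]; ring_nf
  have hlin : 1 - exp (-((φ + 1) * t)) ≤ (φ + 1) * t := by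
    linarith [add_one_le_exp (-((φ + 1) * t))]
  rw [div_le_iff₀ hφ, hmul]
  nlinarith [exp_pos t]

lemma monotoneOn_jumpKernel (hφ : 0 < φ) : MonotoneOn (jumpKernel φ) (Ici 0) := by
  refine monotoneOn_of_deriv_nonneg (convex_Ici 0) (continuous_jumpKernel φ).continuousOn
    (fun z _ => (hasDerivAt_jumpKernel hφ z).differentiableAt.differentiableWithinAt) ?_
  intro z hz
  rw [interior_Ici, mem_Ioi] at hz
  rw [(hasDerivAt_jumpKernel hφ z).deriv]
  have : exp (-φ * z) ≤ exp z := exp_le_exp.2 (by nlinarith)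
  exact div_nonneg (by linarith) (by linarith)

lemma jumpKernel_nonneg (hφ : 0 < φ) {z : ℝ} (hz : 0 ≤ z) : 0 ≤ jumpKernel φ z :=
  jumpKernel_zero φ ▸ monotoneOn_jumpKernel hφ (mem_Ici.2 le_rfl) hz hz

lemma jumpKernel_le_sq_mul_exp (hφ : 0 < φ) {z : ℝ} (hz : 0 ≤ z) :
    jumpKernel φ z ≤ z ^ 2 * exp z := by
  have key := (convex_Icc 0 z).image_sub_le_mul_sub_of_deriv_le (f := jumpKernel φ)
    (C := z * exp z) (continuous_jumpKernel φ).continuousOn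
    (fun t _ => (hasDerivAt_jumpKernel hφ t).differentiableAt.differentiableWithinAt)
    (fun t ht => by
      rw [interior_Icc] at ht
      rw [(hasDerivAt_jumpKernel hφ t).deriv]
      exact (deriv_jumpKernel_le (by linarith) t).trans
        (mul_le_mul ht.2.le (exp_le_exp.2 ht.2.le) (exp_pos t).le hz))
    0 (left_mem_Icc.2 hz) z (right_mem_Icc.2 hz) hz
  simp only [jumpKernel_zero, sub_zero] at key
  linarith

lemma jumpKernel_le_exp (hφ : 0 < φ) {z : ℝ} (hz : 0 ≤ z) : jumpKernel φ z ≤ exp z := by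
  have h₁ : exp (-φ * z) ≤ 1 := exp_le_one_iff.2 (by nlinarith)
  have h₂ : exp z * (1 - exp (-(φ + 1) * z)) / (φ + 1) ≤ exp z := by
    rw [div_le_iff₀ (by linarith)]
    nlinarith [exp_pos z, exp_pos (-(φ + 1) * z)]
  have h₃ : 0 ≤ (1 - exp (-φ * z)) / φ := div_nonneg (by linarith) hφ.le
  rw [jumpKernel]
  linarith

end JumpKernel

section LevyMeasure

variable {ν : Measure ℝ}

lemma integrableOn_of_lintegral_ofReal_lt_top {α : Type*} [MeasurableSpace α] {μ : Measure α}
    {s : Set α} {g : α → ℝ} (hg : AEStronglyMeasurable g (μ.restrict s)) (hg₀ : ∀ x, 0 ≤ g x)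
    (hfin : ∫⁻ x in s, ENNReal.ofReal (g x) ∂μ < ⊤) : IntegrableOn g s μ :=
  ⟨hg, (hasFiniteIntegral_iff_ofReal (ae_of_all _ hg₀)).2 hfin⟩

lemma jumpKernel_le_levyBound {φ : ℝ} (hφ : 0 < φ) {x : ℝ} (hx : 0 < x) :
    jumpKernel φ x ≤ exp 1 * min 1 (x ^ 2) + (Ici 1).indicator exp x := by
  rcases le_or_gt 1 x with h | h
  · rw [indicator_of_mem (show x ∈ Ici 1 from h)]
    have : 0 ≤ exp 1 * min 1 (x ^ 2) := by positivity
    linarith [jumpKernel_le_exp hφ hx.le]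
  · have hmin : min 1 (x ^ 2) = x ^ 2 := min_eq_right (by nlinarith)
    have hexp : exp x ≤ exp 1 := exp_le_exp.2 h.le
    have : 0 ≤ (Ici 1).indicator exp x := indicator_nonneg (fun y _ => (exp_pos y).le) x
    rw [hmin]
    nlinarith [jumpKernel_le_sq_mul_exp hφ hx.le, sq_nonneg x]

lemma integrableOn_jumpKernel {φ : ℝ} (hφ : 0 < φ)
    (hlevy : ∫⁻ x in Ioi 0, ENNReal.ofReal (min 1 (x ^ 2)) ∂ν < ⊤)
    (hexp : ∫⁻ x in Ici 1, ENNReal.ofReal (exp x) ∂ν < ⊤) :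
    IntegrableOn (jumpKernel φ) (Ioi 0) ν := by
  have hsmall : IntegrableOn (fun x => min 1 (x ^ 2)) (Ioi 0) ν :=
    integrableOn_of_lintegral_ofReal_lt_top (by fun_prop) (fun x => by positivity) hlevy
  have hlarge : IntegrableOn ((Ici 1).indicator exp) (Ioi 0) ν :=
    ((integrableOn_of_lintegral_ofReal_lt_top (by fun_prop) (fun x => (exp_pos x).le)
      hexp).integrable_indicator measurableSet_Ici).integrableOn
  refine ((hsmall.const_mul (exp 1)).add hlarge).mono' (by fun_prop) ?_
  filter_upwards [ae_restrict_mem measurableSet_Ioi] with x hx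
  rw [Real.norm_of_nonneg (jumpKernel_nonneg hφ (le_of_lt hx))]
  exact jumpKernel_le_levyBound hφ hx

end LevyMeasure

theorem stmt_12_general (ν : Measure ℝ)
    (hlevy : ∫⁻ x in Set.Ioi (0:ℝ), ENNReal.ofReal (min 1 (x ^ 2)) ∂ν < ⊤)
    (hexp : ∫⁻ x in Set.Ici (1:ℝ), ENNReal.ofReal (Real.exp x) ∂ν < ⊤)
    (φ K : ℝ) (hφ : 0 < φ)
    (f : ℝ → ℝ)
    (hf : ∀ z : ℝ, f z =
      Real.exp z * (1 - Real.exp (-(φ + 1) * z)) / (φ + 1)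
        - (1 - Real.exp (-φ * z)) / φ)
    (J : ℝ → ℝ)
    (hJ : ∀ c : ℝ, J c =
      ∫ x in Set.Ioi (Real.log K - c), f (x - (Real.log K - c)) ∂ν) :
    (∀ c : ℝ, c < Real.log K →
      MeasureTheory.IntegrableOn (fun x : ℝ => f (x - (Real.log K - c)))
        (Set.Ioi (Real.log K - c)) ν) ∧
    MonotoneOn J (Set.Iio (Real.log K)) ∧
    ContinuousOn J (Set.Iio (Real.log K)) ∧
    Tendsto J atBot (nhds 0) ∧
    Tendsto J (nhdsWithin (Real.log K) (Set.Iio (Real.log K)))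
      (nhds (∫ z in Set.Ioi (0:ℝ), f z ∂ν)) := by
  obtain rfl : f = jumpKernel φ := funext hf
  have hcont := continuous_jumpKernel φ
  have hmono := monotoneOn_jumpKernel hφ
  have hint := integrableOn_jumpKernel hφ hlevy hexp
  set G := fun a => ∫ x, jumpKernel φ (max (x - a) 0) ∂ν
  have hJG : J = fun c => G (log K - c) :=
    funext fun c => (hJ c).trans (setIntegral_Ioi_comp_sub (jumpKernel_zero φ) _)
  have hmaps : MapsTo (fun c => log K - c) (Iic (log K)) (Ici 0) := fun _ hc =>
    mem_Ici.2 (sub_nonneg.2 hc)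
  have hGcont : ContinuousOn (fun c => G (log K - c)) (Iic (log K)) :=
    (continuousOn_integral_comp_max_sub_zero hcont hmono (jumpKernel_zero φ) hint).comp
      (by fun_prop) hmaps
  subst hJG
  refine ⟨fun c hc => ?_, fun a ha b hb hab => ?_, hGcont.mono Iio_subset_Iic_self, ?_, ?_⟩
  · exact (integrableOn_Ioi_comp_sub_iff (jumpKernel_zero φ) _).2
      (integrable_comp_max_sub_zero hcont hmono (jumpKernel_zero φ) hint (sub_nonneg.2 hc.le))
  · exact antitoneOn_integral_comp_max_sub_zero hcont hmono (jumpKernel_zero φ) hint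
      (hmaps (Iio_subset_Iic_self hb)) (hmaps (Iio_subset_Iic_self ha)) (by linarith)
  · exact (tendsto_integral_comp_max_sub_zero_atTop hcont hmono (jumpKernel_zero φ) hint).comp
      (tendsto_atTop_add_const_left atBot (log K) tendsto_neg_atBot_atTop)
  · have hG₀ : G (log K - log K) = ∫ z in Ioi 0, jumpKernel φ z ∂ν := by
      simpa [G] using (setIntegral_Ioi_comp_sub (ν := ν) (jumpKernel_zero φ) 0).symm
    exact hG₀ ▸ (hGcont _ self_mem_Iic).tendsto.mono_left (nhdsWithin_mono _ Iio_subset_Iic_self)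

/-- Properties of J(c) = ∫_{(log K − c, ∞)} f(x − (log K − c)) Π(dx)
on (−∞, log K): finiteness (integrability), monotonicity, continuity,
J(c) → 0 as c → −∞ and J(c) → ∫_{(0,∞)} f dΠ as c ↑ log K. -/
theorem stmt_12 (ν : Measure ℝ)
    (hconc : ν (Set.Ioi (0:ℝ))ᶜ = 0)
    (hlevy : ∫⁻ x in Set.Ioi (0:ℝ), ENNReal.ofReal (min 1 (x ^ 2)) ∂ν < ⊤)
    (hexp : ∫⁻ x in Set.Ici (1:ℝ), ENNReal.ofReal (Real.exp x) ∂ν < ⊤)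
    (φ K : ℝ) (hφ : 0 < φ) (hK : 0 < K)
    (f : ℝ → ℝ)
    (hf : ∀ z : ℝ, f z =
      Real.exp z * (1 - Real.exp (-(φ + 1) * z)) / (φ + 1)
        - (1 - Real.exp (-φ * z)) / φ)
    (J : ℝ → ℝ)
    (hJ : ∀ c : ℝ, J c =
      ∫ x in Set.Ioi (Real.log K - c), f (x - (Real.log K - c)) ∂ν) :
    (∀ c : ℝ, c < Real.log K →
      MeasureTheory.IntegrableOn (fun x : ℝ => f (x - (Real.log K - c)))
        (Set.Ioi (Real.log K - c)) ν) ∧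
    MonotoneOn J (Set.Iio (Real.log K)) ∧
    ContinuousOn J (Set.Iio (Real.log K)) ∧
    Tendsto J atBot (nhds 0) ∧
    Tendsto J (nhdsWithin (Real.log K) (Set.Iio (Real.log K)))
      (nhds (∫ z in Set.Ioi (0:ℝ), f z ∂ν)) :=
  stmt_12_general ν hlevy hexp φ K hφ f hf J hJ
end

section
/- Let Π be a measure on ℝ concentrated on (0,∞) satisfying ∫_{(0,∞)} min(1, x²) Π(dx) < ∞ and ∫_{[1,∞)} e^{x} Π(dx) < ∞, let μ ∈ ℝ, b ≥ 0, ψ(θ) = μθ + (b²/2)θ² + ∫_{(0,∞)} (e^{−θx} − 1 + θx·1_{{x<1}}) Π(dx), let φ > 0 and set q = ψ(φ), and let α, β, K > 0. Define, for c < log K, F(c) = K(1 − q/φ) + α/φ + βe^{c}/(φ+1) + K·∫_{(log K − c, ∞)} f(x − (log K − c)) Π(dx), where f(z) = e^z(1 − e^{−(φ+1)z})/(φ+1) − (1 − e^{−φz})/φ. Then F is continuous and strictly increasing on (−∞, log K), F(c) → K − (qK − α)/φ as c → −∞, and F(c) → K + α/φ + K(β + ψ(−1) − q)/(φ+1) −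 Kb²/2 as c ↑ log K. -/
/-!
The kernel `f` vanishes at `0` and has derivative `(e^z - e^{-φz})/(φ+1) ≥ 0` on `[0, ∞)`, so
`T(s) = ∫_{(s,∞)} f(x - s) Π(dx) = ∫_{(0,∞)} f((x - s)⁺) Π(dx)` is dominated by `∫_{(0,∞)} f dΠ`;
by dominated convergence `T` is continuous and antitone on `[0, ∞)` and tends to `0` at `∞`.
Since `F(c) = const + βe^c/(φ+1) + K T(log K - c)`, this gives everything except the value of
`T(0) = ∫ f dΠ`. Both the integrability of `f` and that value come from the identity
`f = g_φ / φ + (g_{-1} - g_φ) / (φ + 1)`, where `g_θ(x) = e^{-θx} - 1 + θx 1_{x<1}` is the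
integrand of `ψ(θ)`: it gives `∫ f dΠ = ψ(φ)/φ + (ψ(-1) - ψ(φ))/(φ+1) - b²/2`.
-/

open MeasureTheory Real Set Filter

lemma exp_sub_one_sub_le_exp_one_mul_sq {u : ℝ} (hu : u ≤ 1) :
    exp u - 1 - u ≤ exp 1 * u ^ 2 := by
  have hlow := add_one_le_exp u
  have hexp_le : exp u ≤ exp 1 := exp_le_exp.2 hu
  -- `1 - u ≤ e^{-u}`, multiplied by `e^u`
  have hmul : exp u - 1 ≤ u * exp u := by
    have h := add_one_le_exp (-u)
    have h' : exp (-u) * exp u = 1 := by rw [← exp_add, neg_add_cancel, exp_zero]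
    nlinarith [exp_pos u]
  rcases le_total 0 u with hu0 | hu0
  · nlinarith [exp_pos u]
  · nlinarith [mul_le_mul_of_nonpos_left (by linarith : u ≤ exp u - 1) hu0,
      one_le_exp zero_le_one]

noncomputable def levyIntegrand (θ x : ℝ) : ℝ :=
  exp (-θ * x) - 1 + θ * (if x < 1 then x else 0)

section Levy

variable {ν : Measure ℝ}

lemma abs_levyIntegrand_le {θ x : ℝ} (hθ : -1 ≤ θ) (hx : 0 < x) :
    |levyIntegrand θ x| ≤ exp 1 * θ ^ 2 * min 1 (x ^ 2) + (Ici 1).indicator exp x := by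
  rcases lt_or_ge x 1 with hx1 | hx1
  · have hupper := exp_sub_one_sub_le_exp_one_mul_sq (u := -θ * x) (by nlinarith)
    have hlower := add_one_le_exp (-θ * x)
    rw [levyIntegrand, if_pos hx1, min_eq_right (by nlinarith), indicator_of_notMem (by simpa)]
    rw [abs_of_nonneg (by linarith)]
    nlinarith
  · have hexp_le : exp (-θ * x) ≤ exp x := exp_le_exp.2 (by nlinarith)
    have hone : 1 ≤ exp x := one_le_exp (by linarith)
    rw [levyIntegrand, if_neg (not_lt.2 hx1), min_eq_left (by nlinarith),
      indicator_of_mem (by simpa), mul_zero, add_zero, abs_sub_le_iff]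
    constructor <;> nlinarith [exp_pos (-θ * x), exp_pos 1]

lemma integrable_levyIntegrand
    (hlevy : ∫⁻ x in Ioi (0:ℝ), ENNReal.ofReal (min 1 (x ^ 2)) ∂ν < ⊤)
    (hexp : ∫⁻ x in Ici (1:ℝ), ENNReal.ofReal (exp x) ∂ν < ⊤) {θ : ℝ} (hθ : -1 ≤ θ) :
    Integrable (levyIntegrand θ) (ν.restrict (Ioi 0)) := by
  have hmin : Integrable (fun x : ℝ => min 1 (x ^ 2)) (ν.restrict (Ioi 0)) :=
    ⟨by fun_prop, (hasFiniteIntegral_iff_ofReal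
      (ae_of_all _ fun x => le_min zero_le_one (sq_nonneg x))).2 hlevy⟩
  have hexpInt : Integrable ((Ici 1).indicator exp) (ν.restrict (Ioi 0)) := by
    rw [integrable_indicator_iff measurableSet_Ici, IntegrableOn,
      Measure.restrict_restrict measurableSet_Ici]
    refine Integrable.mono_measure ?_ (Measure.restrict_mono inter_subset_left le_rfl)
    exact ⟨by fun_prop, (hasFiniteIntegral_iff_ofReal
      (ae_of_all _ fun x => (exp_pos x).le)).2 hexp⟩
  refine ((hmin.const_mul (exp 1 * θ ^ 2)).add hexpInt).mono' ?_ ?_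
  · have hind : Measurable fun x : ℝ => if x < 1 then x else 0 :=
      Measurable.ite measurableSet_Iio measurable_id measurable_const
    exact (((measurable_id.const_mul (-θ)).exp.sub_const 1).add
      (hind.const_mul θ)).aestronglyMeasurable
  · exact ae_restrict_of_forall_mem measurableSet_Ioi fun x hx => abs_levyIntegrand_le hθ hx

end Levy

noncomputable def fitKernel (φ z : ℝ) : ℝ :=
  exp z * (1 - exp (-(φ + 1) * z)) / (φ + 1) - (1 - exp (-φ * z)) / φ

section FitKernel

variable {φ : ℝ}

lemma fitKernel_zero (φ : ℝ) : fitKernel φ 0 = 0 := by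
  simp [fitKernel]

lemma continuous_fitKernel (φ : ℝ) : Continuous (fitKernel φ) := by
  unfold fitKernel
  fun_prop

lemma fitKernel_eq (φ z : ℝ) :
    fitKernel φ z = (exp z - exp (-φ * z)) / (φ + 1) - (1 - exp (-φ * z)) / φ := by
  rw [fitKernel, mul_sub, mul_one, ← exp_add]
  ring_nf

lemma hasDerivAt_fitKernel (hφ : 0 < φ) (z : ℝ) :
    HasDerivAt (fitKernel φ) ((exp z - exp (-φ * z)) / (φ + 1)) z := by
  have hlin : HasDerivAt (fun z => exp (-φ * z)) (exp (-φ * z) * (-φ)) z := by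
    simpa using ((hasDerivAt_id z).const_mul (-φ)).exp
  have h := (((hasDerivAt_exp z).sub hlin).div_const (φ + 1)).sub
    (((hasDerivAt_const z 1).sub hlin).div_const φ)
  rw [show fitKernel φ = _ from funext (fitKernel_eq φ)]
  exact h.congr_deriv (by field_simp; ring)

lemma monotoneOn_fitKernel (hφ : 0 < φ) : MonotoneOn (fitKernel φ) (Ici 0) := by
  refine monotoneOn_of_hasDerivWithinAt_nonneg (convex_Ici 0) (continuous_fitKernel φ).continuousOn
    (fun z _ => (hasDerivAt_fitKernel hφ z).hasDerivWithinAt) fun z hz => ?_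
  have hz : 0 ≤ z := interior_subset hz
  exact div_nonneg (sub_nonneg.2 (exp_le_exp.2 (by nlinarith))) (by linarith)

lemma fitKernel_eq_levyIntegrand (hφ : 0 < φ) (x : ℝ) :
    fitKernel φ x =
      levyIntegrand φ x / φ + (levyIntegrand (-1) x - levyIntegrand φ x) / (φ + 1) := by
  rw [fitKernel_eq, levyIntegrand, levyIntegrand, neg_neg, one_mul]
  field_simp
  ring

variable {ν : Measure ℝ}

lemma integrableOn_fitKernel
    (hlevy : ∫⁻ x in Ioi (0:ℝ), ENNReal.ofReal (min 1 (x ^ 2)) ∂ν < ⊤)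
    (hexp : ∫⁻ x in Ici (1:ℝ), ENNReal.ofReal (exp x) ∂ν < ⊤) (hφ : 0 < φ) :
    IntegrableOn (fitKernel φ) (Ioi 0) ν := by
  have hP := integrable_levyIntegrand hlevy hexp (θ := φ) (by linarith)
  have hM := integrable_levyIntegrand hlevy hexp le_rfl
  rw [IntegrableOn, show fitKernel φ = _ from funext (fitKernel_eq_levyIntegrand hφ)]
  exact (hP.div_const φ).add ((hM.sub hP).div_const (φ + 1))

lemma setIntegral_fitKernel
    (hlevy : ∫⁻ x in Ioi (0:ℝ), ENNReal.ofReal (min 1 (x ^ 2)) ∂ν < ⊤)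
    (hexp : ∫⁻ x in Ici (1:ℝ), ENNReal.ofReal (exp x) ∂ν < ⊤) {μ b : ℝ} {ψ : ℝ → ℝ}
    (hψ : ∀ θ : ℝ, -1 ≤ θ →
      ψ θ = μ * θ + b ^ 2 / 2 * θ ^ 2 + ∫ x in Ioi (0:ℝ), levyIntegrand θ x ∂ν)
    (hφ : 0 < φ) :
    ∫ x in Ioi 0, fitKernel φ x ∂ν = ψ φ / φ + (ψ (-1) - ψ φ) / (φ + 1) - b ^ 2 / 2 := by
  have hP := integrable_levyIntegrand hlevy hexp (θ := φ) (by linarith)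
  have hM := integrable_levyIntegrand hlevy hexp le_rfl
  have hD : Integrable (fun x => (levyIntegrand (-1) x - levyIntegrand φ x) / (φ + 1))
      (ν.restrict (Ioi 0)) := (hM.sub hP).div_const _
  simp_rw [fitKernel_eq_levyIntegrand hφ]
  rw [integral_add (hP.div_const φ) hD, integral_div, integral_div,
    integral_sub hM hP, hψ φ (by linarith), hψ (-1) le_rfl]
  field_simp
  ring

end FitKernel

noncomputable def shiftedTail (ν : Measure ℝ) (g : ℝ → ℝ) (s : ℝ) : ℝ :=
  ∫ x in Ioi s, g (x - s) ∂ν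

section ShiftedTail

variable {ν : Measure ℝ} {g : ℝ → ℝ}

lemma shiftedTail_eq_setIntegral_max (hg0 : g 0 = 0) {s : ℝ} (hs : 0 ≤ s) :
    shiftedTail ν g s = ∫ x in Ioi 0, g (max (x - s) 0) ∂ν := by
  have hind : (fun x => g (max (x - s) 0)) = (Ioi s).indicator (fun x => g (x - s)) := by
    ext x
    by_cases hx : x ∈ Ioi s
    · rw [indicator_of_mem hx, max_eq_left (sub_pos.2 hx).le]
    · rw [indicator_of_notMem hx, max_eq_right (sub_nonpos.2 (not_lt.1 hx)), hg0]
  rw [hind, integral_indicator measurableSet_Ioi, Measure.restrict_restrict measurableSet_Ioi,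
    Ioi_inter_Ioi, sup_eq_left.2 hs, shiftedTail]

lemma ae_norm_comp_max_sub_le (hgm : MonotoneOn g (Ici 0)) (hg0 : g 0 = 0) {s : ℝ}
    (hs : 0 ≤ s) : ∀ᵐ x ∂ν.restrict (Ioi 0), ‖g (max (x - s) 0)‖ ≤ g x := by
  refine ae_restrict_of_forall_mem measurableSet_Ioi fun x hx => ?_
  have h0 : (0 : ℝ) ≤ max (x - s) 0 := le_max_right _ _
  have hx : (0 : ℝ) ≤ x := le_of_lt hx
  have hnonneg : 0 ≤ g (max (x - s) 0) := by
    simpa only [hg0] using hgm (mem_Ici.2 le_rfl) (mem_Ici.2 h0) h0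
  rw [Real.norm_of_nonneg hnonneg]
  exact hgm (mem_Ici.2 h0) (mem_Ici.2 hx) (max_le (by linarith) hx)

lemma antitoneOn_shiftedTail (hgc : Continuous g) (hgm : MonotoneOn g (Ici 0)) (hg0 : g 0 = 0)
    (hgi : IntegrableOn g (Ioi 0) ν) : AntitoneOn (shiftedTail ν g) (Ici 0) := by
  intro s hs t ht hst
  have hint : ∀ r, 0 ≤ r → IntegrableOn (fun x => g (max (x - r) 0)) (Ioi 0) ν := fun r hr =>
    hgi.mono' (by fun_prop : Continuous fun x => g (max (x - r) 0)).aestronglyMeasurable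
      (ae_norm_comp_max_sub_le hgm hg0 hr)
  rw [shiftedTail_eq_setIntegral_max hg0 hs, shiftedTail_eq_setIntegral_max hg0 ht]
  exact integral_mono (hint t ht) (hint s hs) fun x =>
    hgm (mem_Ici.2 (le_max_right _ _)) (mem_Ici.2 (le_max_right _ _))
      (max_le_max_right 0 (by linarith))

lemma continuousOn_shiftedTail (hgc : Continuous g) (hgm : MonotoneOn g (Ici 0)) (hg0 : g 0 = 0)
    (hgi : IntegrableOn g (Ioi 0) ν) : ContinuousOn (shiftedTail ν g) (Ici 0) := by
  refine (continuousOn_of_dominated (F := fun s x => g (max (x - s) 0)) (bound := g)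
    (fun s _ => (by fun_prop : Continuous fun x => g (max (x - s) 0)).aestronglyMeasurable)
    (fun s hs => ae_norm_comp_max_sub_le hgm hg0 hs) hgi
    (ae_of_all _ fun x => (by fun_prop : Continuous fun s => g (max (x - s) 0)).continuousOn)).congr
    fun s hs => shiftedTail_eq_setIntegral_max hg0 hs

lemma tendsto_shiftedTail_atTop (hgc : Continuous g) (hgm : MonotoneOn g (Ici 0)) (hg0 : g 0 = 0)
    (hgi : IntegrableOn g (Ioi 0) ν) : Tendsto (shiftedTail ν g) atTop (nhds 0) := by
  have hlim := tendsto_integral_filter_of_dominated_convergence (μ := ν.restrict (Ioi 0))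
    (l := atTop) (F := fun s x => g (max (x - s) 0)) (f := fun _ => 0) g
    (Eventually.of_forall fun s =>
      (by fun_prop : Continuous fun x => g (max (x - s) 0)).aestronglyMeasurable)
    ((eventually_ge_atTop 0).mono fun s hs => ae_norm_comp_max_sub_le hgm hg0 hs) hgi
    (ae_of_all _ fun x => tendsto_const_nhds.congr' ((eventually_ge_atTop x).mono fun s hs => by
      simp only [max_eq_right (sub_nonpos.2 hs), hg0]))
  rw [integral_zero] at hlim
  exact hlim.congr' ((eventually_ge_atTop 0).mono fun s hs =>
    (shiftedTail_eq_setIntegral_max hg0 hs).symm)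

end ShiftedTail

theorem stmt_13_general (ν : Measure ℝ)
    (hlevy : ∫⁻ x in Set.Ioi (0:ℝ), ENNReal.ofReal (min 1 (x ^ 2)) ∂ν < ⊤)
    (hexp : ∫⁻ x in Set.Ici (1:ℝ), ENNReal.ofReal (Real.exp x) ∂ν < ⊤)
    (μ b : ℝ)
    (ψ : ℝ → ℝ)
    (hψ : ∀ θ : ℝ, -1 ≤ θ →
      ψ θ = μ * θ + b ^ 2 / 2 * θ ^ 2 +
        ∫ x in Set.Ioi (0:ℝ),
          (Real.exp (-θ * x) - 1 + θ * (if x < 1 then x else 0)) ∂ν)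
    (φ : ℝ) (hφ : 0 < φ)
    (α β K : ℝ) (hβ : 0 < β) (hK : 0 < K)
    (f : ℝ → ℝ)
    (hf : ∀ z : ℝ, f z =
      Real.exp z * (1 - Real.exp (-(φ + 1) * z)) / (φ + 1)
        - (1 - Real.exp (-φ * z)) / φ)
    (F : ℝ → ℝ)
    (hF : ∀ c : ℝ, F c =
      K * (1 - ψ φ / φ) + α / φ + β * Real.exp c / (φ + 1)
        + K * ∫ x in Set.Ioi (Real.log K - c), f (x - (Real.log K - c)) ∂ν) :
    ContinuousOn F (Set.Iio (Real.log K)) ∧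
    StrictMonoOn F (Set.Iio (Real.log K)) ∧
    Tendsto F atBot (nhds (K - (ψ φ * K - α) / φ)) ∧
    Tendsto F (nhdsWithin (Real.log K) (Set.Iio (Real.log K)))
      (nhds (K + α / φ + K * (β + ψ (-1) - ψ φ) / (φ + 1) - K * b ^ 2 / 2)) := by
  obtain rfl : f = fitKernel φ := funext hf
  set A := K * (1 - ψ φ / φ) + α / φ
  obtain rfl : F = fun c =>
      A + β * exp c / (φ + 1) + K * shiftedTail ν (fitKernel φ) (log K - c) := funext hF
  have hfi := integrableOn_fitKernel hlevy hexp hφ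
  have hfc := continuous_fitKernel φ
  have hfm := monotoneOn_fitKernel hφ
  have hf0 := fitKernel_zero φ
  have hmaps : MapsTo (fun c => log K - c) (Iic (log K)) (Ici 0) := fun _ hc =>
    mem_Ici.2 (sub_nonneg.2 hc)
  have hcont : ContinuousOn
      (fun c => A + β * exp c / (φ + 1) + K * shiftedTail ν (fitKernel φ) (log K - c))
      (Iic (log K)) :=
    (continuousOn_const.add (by fun_prop)).add
      (((continuousOn_shiftedTail hfc hfm hf0 hfi).comp (by fun_prop) hmaps).const_mul K)
  refine ⟨hcont.mono Iio_subset_Iic_self, ?_, ?_, ?_⟩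
  · refine StrictMonoOn.add_monotone (fun c₁ _ c₂ _ h => by gcongr) fun c₁ h₁ c₂ h₂ h => ?_
    exact mul_le_mul_of_nonneg_left (antitoneOn_shiftedTail hfc hfm hf0 hfi
      (hmaps (Iio_subset_Iic_self h₂)) (hmaps (Iio_subset_Iic_self h₁)) (by linarith)) hK.le
  · have hshift : Tendsto (fun c => log K - c) atBot atTop := by
      simpa only [sub_eq_add_neg] using
        tendsto_atTop_add_const_left _ (log K) tendsto_neg_atBot_atTop
    have hlim := (((tendsto_exp_atBot.const_mul β).div_const (φ + 1)).const_add A).add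
      (((tendsto_shiftedTail_atTop hfc hfm hf0 hfi).comp hshift).const_mul K)
    have hval : K - (ψ φ * K - α) / φ = A + β * 0 / (φ + 1) + K * 0 := by
      simp only [A]
      field_simp
      ring
    rw [hval]
    exact hlim
  · convert ((hcont (log K) (mem_Iic.2 le_rfl)).mono Iio_subset_Iic_self).tendsto using 2
    simp only [sub_self, exp_log hK, shiftedTail, sub_zero, A]
    rw [setIntegral_fitKernel hlevy hexp hψ hφ]
    field_simp
    ring

/-- Properties of the fit function
F(c) = K(1 − q/φ) + α/φ + βe^c/(φ+1) + K·∫_{(log K−c,∞)} f(x−(log K−c)) Π(dx)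
(with q = ψ(φ)) on (−∞, log K): continuity, strict monotonicity, and the limits
F(c) → K − (qK−α)/φ as c → −∞ and
F(c) → K + α/φ + K(β+ψ(−1)−q)/(φ+1) − Kb²/2 as c ↑ log K. -/
theorem stmt_13 (ν : Measure ℝ)
    (hconc : ν (Set.Ioi (0:ℝ))ᶜ = 0)
    (hlevy : ∫⁻ x in Set.Ioi (0:ℝ), ENNReal.ofReal (min 1 (x ^ 2)) ∂ν < ⊤)
    (hexp : ∫⁻ x in Set.Ici (1:ℝ), ENNReal.ofReal (Real.exp x) ∂ν < ⊤)
    (μ b : ℝ) (hb : 0 ≤ b)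
    (ψ : ℝ → ℝ)
    (hψ : ∀ θ : ℝ, -1 ≤ θ →
      ψ θ = μ * θ + b ^ 2 / 2 * θ ^ 2 +
        ∫ x in Set.Ioi (0:ℝ),
          (Real.exp (-θ * x) - 1 + θ * (if x < 1 then x else 0)) ∂ν)
    (φ : ℝ) (hφ : 0 < φ)
    (α β K : ℝ) (hα : 0 < α) (hβ : 0 < β) (hK : 0 < K)
    (f : ℝ → ℝ)
    (hf : ∀ z : ℝ, f z =
      Real.exp z * (1 - Real.exp (-(φ + 1) * z)) / (φ + 1)
        - (1 - Real.exp (-φ * z)) / φ)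
    (F : ℝ → ℝ)
    (hF : ∀ c : ℝ, F c =
      K * (1 - ψ φ / φ) + α / φ + β * Real.exp c / (φ + 1)
        + K * ∫ x in Set.Ioi (Real.log K - c), f (x - (Real.log K - c)) ∂ν) :
    ContinuousOn F (Set.Iio (Real.log K)) ∧
    StrictMonoOn F (Set.Iio (Real.log K)) ∧
    Tendsto F atBot (nhds (K - (ψ φ * K - α) / φ)) ∧
    Tendsto F (nhdsWithin (Real.log K) (Set.Iio (Real.log K)))
      (nhds (K + α / φ + K * (β + ψ (-1) - ψ φ) / (φ + 1) - K * b ^ 2 / 2)) :=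
  stmt_13_general ν hlevy hexp μ b ψ hψ φ hφ α β K hβ hK f hf F hF
end

section
/- Let Π be a measure on ℝ concentrated on (0,∞) satisfying ∫_{(0,∞)} min(1, x²) Π(dx) < ∞ and ∫_{[1,∞)} e^{x} Π(dx) < ∞, let μ ∈ ℝ, b ≥ 0, ψ(θ) = μθ + (b²/2)θ² + ∫_{(0,∞)} (e^{−θx} − 1 + θx·1_{{x<1}}) Π(dx), let φ > 0 with q := ψ(φ), and let α, β, K > 0. Assume q > α/K and α/φ + K(ψ(−1) + β − q)/(φ+1) > Kb²/2. Then the equation qK/φ = α/φ + βe^{c}/(φ+1) + K·∫_{(log K − c, ∞)} f(x − (log K − c)) Π(dx), where f(z) = e^z(1 − e^{−(φ+1)z})/(φ+1) − (1 − e^{−φz})/φ, has a unique solution c* in (−∞, log K). -/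
/-!
Write `G c` for the right-hand side. Since `f` is increasing on `[0, ∞)` with `f 0 = 0`, the
integral `∫_{(a,∞)} f (x - a) Π(dx)` is continuous and nonincreasing in `a ≥ 0` and tends to `0`
as `a → ∞` (dominated convergence, with `f` itself as dominating function). Hence `G` is
continuous and strictly increasing on `(-∞, log K]` with `G c → α/φ < qK/φ` as `c → -∞`.
At `c = log K`, splitting `f` into the integrands of `ψ (-1)` and `ψ φ` gives
`G (log K) - qK/φ = α/φ + K(ψ(-1) + β - q)/(φ+1) - Kb²/2 > 0`, and the intermediate value
theorem yields the unique root.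
-/

open MeasureTheory Real Set Filter Topology

theorem existsUnique_eq_of_strictMonoOn_Iic {g : ℝ → ℝ} {L l y : ℝ}
    (hmono : StrictMonoOn g (Iic L)) (hcont : ContinuousOn g (Iic L))
    (hlim : Tendsto g atBot (𝓝 l)) (hly : l < y) (hyL : y < g L) :
    ∃! c, c < L ∧ y = g c := by
  obtain ⟨c₀, hgc₀, hc₀L⟩ :=
    ((hlim.eventually (gt_mem_nhds hly)).and (eventually_lt_atBot L)).exists
  obtain ⟨c, hc, hgc⟩ := intermediate_value_Ioo hc₀L.le (hcont.mono Icc_subset_Iic_self) ⟨hgc₀, hyL⟩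
  exact ⟨c, ⟨hc.2, hgc.symm⟩, fun c' ⟨hc'L, hc'⟩ =>
    hmono.injOn (mem_Iic.2 hc'L.le) (mem_Iic.2 hc.2.le) (hc'.symm.trans hgc.symm)⟩

namespace LevyStoppingLevel

lemma exp_neg_sub_one_add_le_sq {t : ℝ} (ht : 0 ≤ t) : exp (-t) - 1 + t ≤ t ^ 2 := by
  rcases le_or_gt t 1 with ht1 | ht1
  · have h := abs_exp_sub_one_sub_id_le (x := -t) (by rwa [abs_neg, abs_of_nonneg ht])
    rw [neg_sq] at h
    linarith [(abs_le.1 h).2]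
  · have h : exp (-t) ≤ 1 := exp_le_one_iff.2 (by linarith)
    nlinarith

/-- The integrand of the jump part of the Laplace exponent `ψ θ`. -/
noncomputable def levyIntegrand (θ x : ℝ) : ℝ :=
  exp (-θ * x) - 1 + θ * (if x < 1 then x else 0)

lemma measurable_levyIntegrand (θ : ℝ) : Measurable (levyIntegrand θ) := by
  have : Measurable fun x : ℝ => if x < 1 then x else 0 :=
    Measurable.ite measurableSet_Iio measurable_id measurable_const
  unfold levyIntegrand
  fun_prop

lemma abs_levyIntegrand_neg_one_le {x : ℝ} (hx : 0 < x) :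
    |levyIntegrand (-1) x| ≤ min 1 (x ^ 2) + (Ici 1).indicator exp x := by
  have hmin : 0 ≤ min 1 (x ^ 2) := by positivity
  rcases lt_or_ge x 1 with hx1 | hx1
  · have h := abs_exp_sub_one_sub_id_le (x := x) (by rw [abs_of_pos hx]; exact hx1.le)
    have e : levyIntegrand (-1) x = exp x - 1 - x := by
      rw [levyIntegrand, if_pos hx1]; ring_nf
    rw [e, indicator_of_notMem (notMem_Ici.2 hx1), min_eq_right (by nlinarith), add_zero]
    exact h
  · have h : 1 ≤ exp x := one_le_exp hx.le
    have e : levyIntegrand (-1) x = exp x - 1 := by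
      rw [levyIntegrand, if_neg (not_lt.2 hx1)]; ring_nf
    rw [e, abs_of_nonneg (by linarith), indicator_of_mem (mem_Ici.2 hx1)]
    linarith

lemma abs_levyIntegrand_le {θ x : ℝ} (hθ : 0 ≤ θ) (hx : 0 ≤ x) :
    |levyIntegrand θ x| ≤ (θ ^ 2 + 1) * min 1 (x ^ 2) := by
  rcases lt_or_ge x 1 with hx1 | hx1
  · have hlow := add_one_le_exp (-(θ * x))
    have hup := exp_neg_sub_one_add_le_sq (mul_nonneg hθ hx)
    rw [levyIntegrand, if_pos hx1, min_eq_right (by nlinarith), neg_mul,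
      abs_of_nonneg (by linarith)]
    nlinarith [sq_nonneg x]
  · have h0 : 0 < exp (-θ * x) := exp_pos _
    have h1 : exp (-θ * x) ≤ 1 := exp_le_one_iff.2 (by nlinarith)
    rw [levyIntegrand, if_neg (not_lt.2 hx1), min_eq_left (by nlinarith),
      abs_of_nonpos (by linarith)]
    nlinarith [sq_nonneg θ]

section Integrability

variable {ν : Measure ℝ} (hsmall : IntegrableOn (fun x => min 1 (x ^ 2)) (Ioi 0) ν)
include hsmall

lemma integrableOn_levyIntegrand_neg_one (hlarge : IntegrableOn exp (Ici 1) ν) :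
    IntegrableOn (levyIntegrand (-1)) (Ioi 0) ν := by
  refine (hsmall.add ((integrable_indicator_iff measurableSet_Ici).2 hlarge).integrableOn).mono'
    (measurable_levyIntegrand _).aestronglyMeasurable ?_
  filter_upwards [ae_restrict_mem measurableSet_Ioi] with x hx
  exact abs_levyIntegrand_neg_one_le hx

lemma integrableOn_levyIntegrand {θ : ℝ} (hθ : 0 ≤ θ) :
    IntegrableOn (levyIntegrand θ) (Ioi 0) ν := by
  refine (hsmall.const_mul (θ ^ 2 + 1)).mono'
    (measurable_levyIntegrand _).aestronglyMeasurable ?_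
  filter_upwards [ae_restrict_mem measurableSet_Ioi] with x hx
  exact abs_levyIntegrand_le hθ (le_of_lt hx)

end Integrability

/-- The function `f` of the level equation. -/
noncomputable def kernel (φ z : ℝ) : ℝ :=
  exp z * (1 - exp (-(φ + 1) * z)) / (φ + 1) - (1 - exp (-φ * z)) / φ

section Kernel

variable {φ : ℝ}

lemma kernel_zero : kernel φ 0 = 0 := by simp [kernel]

lemma continuous_kernel : Continuous (kernel φ) := by
  unfold kernel
  fun_prop

lemma kernel_eq (z : ℝ) :
    kernel φ z = (exp z - exp (-φ * z)) / (φ + 1) - (1 - exp (-φ * z)) / φ := by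
  have h : exp z * exp (-(φ + 1) * z) = exp (-φ * z) := by rw [← exp_add]; ring_nf
  rw [kernel, mul_sub, mul_one, h]

lemma kernel_eq_levyIntegrand (hφ : 0 < φ) (x : ℝ) :
    kernel φ x = levyIntegrand (-1) x / (φ + 1) + levyIntegrand φ x / (φ * (φ + 1)) := by
  rw [kernel_eq, levyIntegrand, levyIntegrand]
  field_simp
  ring

lemma hasDerivAt_kernel (hφ : 0 < φ) (z : ℝ) :
    HasDerivAt (kernel φ) ((exp z - exp (-φ * z)) / (φ + 1)) z := by
  have hexp : HasDerivAt (fun z => exp (-φ * z)) (exp (-φ * z) * -φ) z := by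
    simpa using ((hasDerivAt_id z).const_mul (-φ)).exp
  have h : HasDerivAt (fun z => (exp z - exp (-φ * z)) / (φ + 1) - (1 - exp (-φ * z)) / φ)
      ((exp z - exp (-φ * z) * -φ) / (φ + 1) - (0 - exp (-φ * z) * -φ) / φ) z :=
    (((hasDerivAt_exp z).sub hexp).div_const (φ + 1)).sub
      (((hasDerivAt_const z 1).sub hexp).div_const φ)
  rw [show kernel φ = _ from funext kernel_eq]
  convert h using 1
  field_simp
  ring

lemma monotoneOn_kernel (hφ : 0 < φ) : MonotoneOn (kernel φ) (Ici 0) := by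
  refine monotoneOn_of_hasDerivWithinAt_nonneg (convex_Ici 0) continuous_kernel.continuousOn
    (fun z _ => (hasDerivAt_kernel hφ z).hasDerivWithinAt) fun z hz => ?_
  rw [interior_Ici] at hz
  have : exp (-φ * z) ≤ exp z := exp_le_exp.2 (by nlinarith [mem_Ioi.1 hz])
  exact div_nonneg (by linarith) (by linarith)

lemma kernel_nonneg (hφ : 0 < φ) {z : ℝ} (hz : 0 ≤ z) : 0 ≤ kernel φ z :=
  kernel_zero (φ := φ) ▸ monotoneOn_kernel hφ self_mem_Ici hz hz

end Kernel

lemma integrableOn_kernel {ν : Measure ℝ} {φ : ℝ} (hφ : 0 < φ)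
    (hneg : IntegrableOn (levyIntegrand (-1)) (Ioi 0) ν)
    (hpos : IntegrableOn (levyIntegrand φ) (Ioi 0) ν) :
    IntegrableOn (kernel φ) (Ioi 0) ν := by
  rw [show kernel φ = _ from funext (kernel_eq_levyIntegrand hφ)]
  exact (hneg.div_const _).add (hpos.div_const _)

/-- For `a ≥ 0` this is `∫_{(a,∞)} f (x - a) ν(dx)` (see `setIntegral_Ioi_kernel_sub`); the
truncation `max (x - a) 0` makes the integrand continuous in `a` and avoids the moving domain. -/
noncomputable def tailIntegral (ν : Measure ℝ) (φ a : ℝ) : ℝ :=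
  ∫ x in Ioi 0, kernel φ (max (x - a) 0) ∂ν

section TailIntegral

variable {ν : Measure ℝ} {φ : ℝ}

lemma setIntegral_Ioi_kernel_sub {a : ℝ} (ha : 0 ≤ a) :
    ∫ x in Ioi a, kernel φ (x - a) ∂ν = tailIntegral ν φ a := by
  have h : EqOn (fun x => kernel φ (max (x - a) 0))
      ((Ioi a).indicator fun x => kernel φ (x - a)) (Ioi 0) := by
    intro x _
    dsimp only
    by_cases hx : a < x
    · rw [indicator_of_mem (mem_Ioi.2 hx), max_eq_left (by linarith)]
    · rw [indicator_of_notMem (notMem_Ioi.2 (not_lt.1 hx)), max_eq_right (by linarith),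
        kernel_zero]
  rw [tailIntegral, setIntegral_congr_fun measurableSet_Ioi h,
    setIntegral_indicator measurableSet_Ioi, Ioi_inter_Ioi, max_eq_right ha]

lemma tailIntegral_zero (hφ : 0 < φ)
    (hneg : IntegrableOn (levyIntegrand (-1)) (Ioi 0) ν)
    (hpos : IntegrableOn (levyIntegrand φ) (Ioi 0) ν) :
    tailIntegral ν φ 0 = (∫ x in Ioi 0, levyIntegrand (-1) x ∂ν) / (φ + 1)
      + (∫ x in Ioi 0, levyIntegrand φ x ∂ν) / (φ * (φ + 1)) := by
  have h : EqOn (fun x => kernel φ (max (x - 0) 0))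
      (fun x => levyIntegrand (-1) x / (φ + 1) + levyIntegrand φ x / (φ * (φ + 1))) (Ioi 0) :=
    fun x hx => by dsimp only; rw [sub_zero, max_eq_left (le_of_lt hx), kernel_eq_levyIntegrand hφ]
  rw [tailIntegral, setIntegral_congr_fun measurableSet_Ioi h,
    integral_add (hneg.div_const _) (hpos.div_const _), integral_div, integral_div]

lemma kernel_max_sub_le_of_le (hφ : 0 < φ) {a a' : ℝ} (h : a ≤ a') (x : ℝ) :
    kernel φ (max (x - a') 0) ≤ kernel φ (max (x - a) 0) :=
  monotoneOn_kernel hφ (mem_Ici.2 (le_max_right _ _)) (mem_Ici.2 (le_max_right _ _))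
    (max_le_max (sub_le_sub_left h x) le_rfl)

lemma norm_kernel_max_sub_le (hφ : 0 < φ) {a x : ℝ} (ha : 0 ≤ a) (hx : 0 ≤ x) :
    ‖kernel φ (max (x - a) 0)‖ ≤ kernel φ x := by
  rw [norm_of_nonneg (kernel_nonneg hφ (le_max_right _ _))]
  simpa [max_eq_left hx] using kernel_max_sub_le_of_le hφ ha x

variable (hφ : 0 < φ) (hk : IntegrableOn (kernel φ) (Ioi 0) ν)
include hφ hk

lemma integrableOn_kernel_max_sub {a : ℝ} (ha : 0 ≤ a) :
    IntegrableOn (fun x => kernel φ (max (x - a) 0)) (Ioi 0) ν := by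
  refine hk.mono' (continuous_kernel.comp (by fun_prop)).aestronglyMeasurable ?_
  filter_upwards [ae_restrict_mem measurableSet_Ioi] with x hx
  exact norm_kernel_max_sub_le hφ ha (le_of_lt hx)

lemma antitoneOn_tailIntegral : AntitoneOn (tailIntegral ν φ) (Ici 0) :=
  fun _ ha _ ha' h => setIntegral_mono (integrableOn_kernel_max_sub hφ hk ha')
    (integrableOn_kernel_max_sub hφ hk ha) (kernel_max_sub_le_of_le hφ h)

lemma continuousOn_tailIntegral : ContinuousOn (tailIntegral ν φ) (Ici 0) := by
  refine continuousOn_of_dominated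
    (fun a _ => (continuous_kernel.comp (by fun_prop)).aestronglyMeasurable)
    (fun a ha => ?_) hk (ae_of_all _ fun x => (continuous_kernel.comp (by fun_prop)).continuousOn)
  filter_upwards [ae_restrict_mem measurableSet_Ioi] with x hx
  exact norm_kernel_max_sub_le hφ ha (le_of_lt hx)

lemma tendsto_tailIntegral_atTop : Tendsto (tailIntegral ν φ) atTop (𝓝 0) := by
  have h : Tendsto (tailIntegral ν φ) atTop (𝓝 (∫ x in Ioi 0, (0 : ℝ) ∂ν)) :=
    tendsto_integral_filter_of_dominated_convergence (μ := ν.restrict (Ioi 0))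
      (F := fun a x => kernel φ (max (x - a) 0)) (f := fun _ => 0) (kernel φ)
      (Eventually.of_forall fun a => (continuous_kernel.comp (by fun_prop)).aestronglyMeasurable)
      ((eventually_ge_atTop 0).mono fun a ha => by
        filter_upwards [ae_restrict_mem measurableSet_Ioi] with x hx
        exact norm_kernel_max_sub_le hφ ha (le_of_lt hx))
      hk
      (ae_of_all _ fun x => tendsto_const_nhds.congr' <| (eventually_ge_atTop x).mono
        fun a ha => by simp only [max_eq_right (sub_nonpos.2 ha), kernel_zero])
  rwa [integral_zero] at h

end TailIntegral

noncomputable def levelRHS (ν : Measure ℝ) (φ α β K c : ℝ) : ℝ :=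
  α / φ + β * exp c / (φ + 1) + K * tailIntegral ν φ (log K - c)

lemma levelRHS_log_sub_eq {ν : Measure ℝ} {φ : ℝ} (α β : ℝ) {K μ b ψneg ψφ : ℝ} (hφ : 0 < φ)
    (hK : 0 < K) (hneg : IntegrableOn (levyIntegrand (-1)) (Ioi 0) ν)
    (hpos : IntegrableOn (levyIntegrand φ) (Ioi 0) ν)
    (hψneg : ψneg = μ * -1 + b ^ 2 / 2 * (-1) ^ 2 + ∫ x in Ioi 0, levyIntegrand (-1) x ∂ν)
    (hψφ : ψφ = μ * φ + b ^ 2 / 2 * φ ^ 2 + ∫ x in Ioi 0, levyIntegrand φ x ∂ν) :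
    levelRHS ν φ α β K (log K) - ψφ * K / φ
      = α / φ + K * (ψneg + β - ψφ) / (φ + 1) - K * b ^ 2 / 2 := by
  rw [levelRHS, sub_self, exp_log hK, tailIntegral_zero hφ hneg hpos, hψneg, hψφ]
  field_simp
  ring

section LevelRHS

variable {ν : Measure ℝ} {φ : ℝ} (α β K : ℝ) (hφ : 0 < φ)
  (hk : IntegrableOn (kernel φ) (Ioi 0) ν)
include hφ hk

lemma strictMonoOn_levelRHS (hβ : 0 < β) (hK : 0 ≤ K) :
    StrictMonoOn (levelRHS ν φ α β K) (Iic (log K)) := by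
  intro c _ c' hc' h
  have hexp : β * exp c / (φ + 1) < β * exp c' / (φ + 1) := by gcongr
  have htail : K * tailIntegral ν φ (log K - c) ≤ K * tailIntegral ν φ (log K - c') :=
    mul_le_mul_of_nonneg_left (antitoneOn_tailIntegral hφ hk (mem_Ici.2 (sub_nonneg.2 hc'))
      (mem_Ici.2 (by linarith [mem_Iic.1 hc'])) (by linarith)) hK
  unfold levelRHS
  linarith

lemma continuousOn_levelRHS : ContinuousOn (levelRHS ν φ α β K) (Iic (log K)) := by
  have h : ContinuousOn (fun c => tailIntegral ν φ (log K - c)) (Iic (log K)) :=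
    (continuousOn_tailIntegral hφ hk).comp (by fun_prop) fun c hc => mem_Ici.2 (sub_nonneg.2 hc)
  unfold levelRHS
  fun_prop

lemma tendsto_levelRHS_atBot : Tendsto (levelRHS ν φ α β K) atBot (𝓝 (α / φ)) := by
  have hshift : Tendsto (fun c => log K - c) atBot atTop :=
    tendsto_atTop_add_const_left _ _ tendsto_neg_atBot_atTop
  have h : Tendsto (levelRHS ν φ α β K) atBot (𝓝 (α / φ + β * 0 / (φ + 1) + K * 0)) :=
    (((tendsto_exp_atBot.const_mul β).div_const (φ + 1)).const_add (α / φ)).add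
      (((tendsto_tailIntegral_atTop hφ hk).comp hshift).const_mul K)
  simpa using h

end LevelRHS

end LevyStoppingLevel

open LevyStoppingLevel

theorem stmt_14_general (ν : Measure ℝ)
    (hlevy : ∫⁻ x in Set.Ioi (0:ℝ), ENNReal.ofReal (min 1 (x ^ 2)) ∂ν < ⊤)
    (hexp : ∫⁻ x in Set.Ici (1:ℝ), ENNReal.ofReal (Real.exp x) ∂ν < ⊤)
    (μ b : ℝ)
    (ψ : ℝ → ℝ)
    (hψ : ∀ θ : ℝ, -1 ≤ θ →
      ψ θ = μ * θ + b ^ 2 / 2 * θ ^ 2 +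
        ∫ x in Set.Ioi (0:ℝ),
          (Real.exp (-θ * x) - 1 + θ * (if x < 1 then x else 0)) ∂ν)
    (φ : ℝ) (hφ : 0 < φ)
    (α β K : ℝ) (hβ : 0 < β) (hK : 0 < K)
    (f : ℝ → ℝ)
    (hf : ∀ z : ℝ, f z =
      Real.exp z * (1 - Real.exp (-(φ + 1) * z)) / (φ + 1)
        - (1 - Real.exp (-φ * z)) / φ)
    (hqα : α / K < ψ φ)
    (hq1 : K * b ^ 2 / 2 < α / φ + K * (ψ (-1) + β - ψ φ) / (φ + 1)) :
    ∃! c : ℝ, c < Real.log K ∧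
      ψ φ * K / φ =
        α / φ + β * Real.exp c / (φ + 1)
          + K * ∫ x in Set.Ioi (Real.log K - c), f (x - (Real.log K - c)) ∂ν := by
  obtain rfl : f = kernel φ := funext hf
  have hsmall : IntegrableOn (fun x => min 1 (x ^ 2)) (Ioi 0) ν :=
    (lintegral_ofReal_ne_top_iff_integrable (by fun_prop)
      (ae_of_all _ fun x => by positivity)).1 hlevy.ne
  have hlarge : IntegrableOn exp (Ici 1) ν :=
    (lintegral_ofReal_ne_top_iff_integrable (by fun_prop)
      (ae_of_all _ fun x => (exp_pos x).le)).1 hexp.ne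
  have hneg := integrableOn_levyIntegrand_neg_one hsmall hlarge
  have hpos := integrableOn_levyIntegrand hsmall hφ.le
  have hk := integrableOn_kernel hφ hneg hpos
  have hlow : α / φ < ψ φ * K / φ := div_lt_div_of_pos_right ((div_lt_iff₀ hK).1 hqα) hφ
  have hhigh : ψ φ * K / φ < levelRHS ν φ α β K (log K) := by
    have := levelRHS_log_sub_eq α β hφ hK hneg hpos (hψ (-1) le_rfl) (hψ φ (by linarith))
    linarith
  obtain ⟨c, ⟨hcL, hc⟩, huniq⟩ := existsUnique_eq_of_strictMonoOn_Iic
    (strictMonoOn_levelRHS α β K hφ hk hβ hK.le) (continuousOn_levelRHS α β K hφ hk)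
    (tendsto_levelRHS_atBot α β K hφ hk) hlow hhigh
  have hrhs : ∀ c < log K, α / φ + β * exp c / (φ + 1)
      + K * ∫ x in Ioi (log K - c), kernel φ (x - (log K - c)) ∂ν = levelRHS ν φ α β K c :=
    fun c hc => by rw [levelRHS, setIntegral_Ioi_kernel_sub (sub_nonneg.2 hc.le)]
  exact ⟨c, ⟨hcL, hc.trans (hrhs c hcL).symm⟩,
    fun c' ⟨hc'L, hc'⟩ => huniq c' ⟨hc'L, hc'.trans (hrhs c' hc'L)⟩⟩

/-- Theorem 4(i) of the paper: under q > α/K and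
α/φ + K(ψ(−1)+β−q)/(φ+1) > Kb²/2 (with q = ψ(φ)), the functional equation
qK/φ = α/φ + βe^c/(φ+1) + K·∫_{(log K−c,∞)} f(x−(log K−c)) Π(dx)
has a unique solution c* in (−∞, log K). -/
theorem stmt_14 (ν : Measure ℝ)
    (hconc : ν (Set.Ioi (0:ℝ))ᶜ = 0)
    (hlevy : ∫⁻ x in Set.Ioi (0:ℝ), ENNReal.ofReal (min 1 (x ^ 2)) ∂ν < ⊤)
    (hexp : ∫⁻ x in Set.Ici (1:ℝ), ENNReal.ofReal (Real.exp x) ∂ν < ⊤)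
    (μ b : ℝ) (hb : 0 ≤ b)
    (ψ : ℝ → ℝ)
    (hψ : ∀ θ : ℝ, -1 ≤ θ →
      ψ θ = μ * θ + b ^ 2 / 2 * θ ^ 2 +
        ∫ x in Set.Ioi (0:ℝ),
          (Real.exp (-θ * x) - 1 + θ * (if x < 1 then x else 0)) ∂ν)
    (φ : ℝ) (hφ : 0 < φ)
    (α β K : ℝ) (hα : 0 < α) (hβ : 0 < β) (hK : 0 < K)
    (f : ℝ → ℝ)
    (hf : ∀ z : ℝ, f z =
      Real.exp z * (1 - Real.exp (-(φ + 1) * z)) / (φ + 1)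
        - (1 - Real.exp (-φ * z)) / φ)
    (hqα : α / K < ψ φ)
    (hq1 : K * b ^ 2 / 2 < α / φ + K * (ψ (-1) + β - ψ φ) / (φ + 1)) :
    ∃! c : ℝ, c < Real.log K ∧
      ψ φ * K / φ =
        α / φ + β * Real.exp c / (φ + 1)
          + K * ∫ x in Set.Ioi (Real.log K - c), f (x - (Real.log K - c)) ∂ν :=
  stmt_14_general ν hlevy hexp μ b ψ hψ φ hφ α β K hβ hK f hf hqα hq1
end

section
/- Let Π be a measure on ℝ concentrated on (0,∞), let φ > 0, K > 0 and c < log K, and set a = log K − c > 0. Then, as an identity of integrals with values in [0,∞], ∫_{(0,∞)} ( ∫_{−∞}^{0} e^{φy} (e^{c+u+y} − K) · 1_{{u+y > a}} dy ) Π(du) = K ∫_{(a,∞)} f(u − a) Π(du), where f(z) = e^z(1 − e^{−(φ+1)z})/(φ+1) − (1 − e^{−φz})/φ; in particular the inner integrand is nonnegative since u + y > a implies e^{c+u+y} > K. -/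
open MeasureTheory Real Set Filter

/-!
Since `c = log K - a`, we have `e^{c+u+y} = K e^{(u-a)+y}`, so the inner integral depends only on
`z = u - a`. For `u ≤ a` the indicator vanishes on `y < 0`; for `u > a` the inner integral is the
Riemann integral `K ∫_{-z}^0 e^{φy} (e^{z+y} - 1) dy = K f(z)` of a nonnegative continuous function.
Because `a > 0`, the outer integral over `(0,∞)` then collapses to one over `(a,∞)`.
-/

lemma integral_exp_mul_of_ne_zero {r : ℝ} (hr : r ≠ 0) (s : ℝ) :
    ∫ y in s..(0:ℝ), exp (r * y) = (1 - exp (r * s)) / r := by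
  rw [intervalIntegral.integral_comp_mul_left (fun y => exp y) hr, integral_exp]
  simp [div_eq_inv_mul]

lemma integral_exp_mul_mul_exp_add_sub_one {φ : ℝ} (hφ : φ ≠ 0) (hφ₁ : φ + 1 ≠ 0) (z : ℝ) :
    ∫ y in -z..(0:ℝ), exp (φ * y) * (exp (z + y) - 1) =
      exp z * (1 - exp (-(φ + 1) * z)) / (φ + 1) - (1 - exp (-φ * z)) / φ := by
  have hsplit : ∀ y,
      exp (φ * y) * (exp (z + y) - 1) = exp z * exp ((φ + 1) * y) - exp (φ * y) := by
    intro y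
    rw [mul_sub, mul_one, ← exp_add, ← exp_add]
    ring_nf
  simp_rw [hsplit]
  rw [intervalIntegral.integral_sub ((by fun_prop : Continuous _).intervalIntegrable _ _)
      ((by fun_prop : Continuous _).intervalIntegrable _ _),
    intervalIntegral.integral_const_mul, integral_exp_mul_of_ne_zero hφ₁,
    integral_exp_mul_of_ne_zero hφ]
  ring_nf

lemma lintegral_Iio_zero_ite_lt_of_nonpos {b : ℝ} (hb : b ≤ 0) {g : ℝ → ℝ} (hg : Continuous g)
    (hg_nonneg : ∀ y, b < y → 0 ≤ g y) :
    ∫⁻ y in Iio 0, ENNReal.ofReal (if b < y then g y else 0) =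
      ENNReal.ofReal (∫ y in b..0, g y) := by
  have hind : (fun y => ENNReal.ofReal (if b < y then g y else 0)) =
      (Ioi b).indicator (fun y => ENNReal.ofReal (g y)) := by
    ext y
    by_cases hy : b < y <;> simp [hy]
  rw [hind, lintegral_indicator measurableSet_Ioi, Measure.restrict_restrict measurableSet_Ioi,
    Ioi_inter_Iio, intervalIntegral.integral_of_le hb, integral_Ioc_eq_integral_Ioo,
    ofReal_integral_eq_lintegral_ofReal (hg.integrableOn_Icc.mono_set Ioo_subset_Icc_self)
      ((ae_restrict_iff' measurableSet_Ioo).mpr (Eventually.of_forall fun y hy => hg_nonneg y hy.1))]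

lemma lintegral_Iio_zero_ite_lt_of_nonneg {b : ℝ} (hb : 0 ≤ b) (g : ℝ → ℝ) :
    ∫⁻ y in Iio 0, ENNReal.ofReal (if b < y then g y else 0) = 0 := by
  refine (setLIntegral_congr_fun measurableSet_Iio fun y hy => ?_).trans lintegral_zero
  rw [if_neg (not_lt.mpr (hy.out.le.trans hb)), ENNReal.ofReal_zero]

theorem stmt_15_general (ν : Measure ℝ)
    (φ K c : ℝ) (hφ : 0 < φ) (hK : 0 < K) (hc : c < Real.log K)
    (f : ℝ → ℝ)
    (hf : ∀ z : ℝ, f z =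
      Real.exp z * (1 - Real.exp (-(φ + 1) * z)) / (φ + 1)
        - (1 - Real.exp (-φ * z)) / φ)
    (a : ℝ) (ha : a = Real.log K - c) :
    (∫⁻ u in Set.Ioi (0:ℝ),
        (∫⁻ y in Set.Iio (0:ℝ),
          ENNReal.ofReal
            (if a < u + y then Real.exp (φ * y) * (Real.exp (c + u + y) - K) else 0))
        ∂ν)
      = ∫⁻ u in Set.Ioi a, ENNReal.ofReal (K * f (u - a)) ∂ν ∧
    ∀ u y : ℝ, a < u + y → K < Real.exp (c + u + y) := by
  have ha₀ : 0 < a := by linarith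
  have hK_lt : ∀ u y : ℝ, a < u + y → K < exp (c + u + y) :=
    fun u y h => (log_lt_iff_lt_exp hK).mp (by linarith)
  have hinner : ∀ u, ∫⁻ y in Iio 0,
      ENNReal.ofReal (if a < u + y then exp (φ * y) * (exp (c + u + y) - K) else 0) =
        (Ioi a).indicator (fun u => ENNReal.ofReal (K * f (u - a))) u := by
    intro u
    simp_rw [← sub_lt_iff_lt_add']
    rcases le_or_gt u a with hu | hu
    · rw [indicator_of_notMem (notMem_Ioi.mpr hu),
        lintegral_Iio_zero_ite_lt_of_nonneg (sub_nonneg.mpr hu)]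
    rw [indicator_of_mem (mem_Ioi.mpr hu),
      lintegral_Iio_zero_ite_lt_of_nonpos (by linarith) (by fun_prop)
        fun y hy => mul_nonneg (exp_pos _).le (sub_nonneg.mpr (hK_lt u y (by linarith)).le)]
    have hexp : ∀ y, exp (c + u + y) = K * exp (u - a + y) := by
      intro y
      rw [← exp_log hK, ← exp_add, ha]
      ring_nf
    simp_rw [hexp, ← mul_sub_one, mul_left_comm _ K]
    rw [intervalIntegral.integral_const_mul, show a - u = -(u - a) by ring,
      integral_exp_mul_mul_exp_add_sub_one hφ.ne' (by linarith), hf]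
  refine ⟨?_, hK_lt⟩
  rw [lintegral_congr hinner, lintegral_indicator measurableSet_Ioi,
    Measure.restrict_restrict measurableSet_Ioi, Ioi_inter_Ioi, sup_eq_left.mpr ha₀.le]

/-- The double-integral identity (in [0,∞]):
∫_{(0,∞)} (∫_{−∞}^0 e^{φy}(e^{c+u+y} − K)·1_{u+y>a} dy) Π(du)
  = K ∫_{(a,∞)} f(u − a) Π(du), where a = log K − c; and the inner integrand
is nonnegative since u + y > a implies e^{c+u+y} > K. -/
theorem stmt_15 (ν : Measure ℝ)
    (hconc : ν (Set.Ioi (0:ℝ))ᶜ = 0)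
    (φ K c : ℝ) (hφ : 0 < φ) (hK : 0 < K) (hc : c < Real.log K)
    (f : ℝ → ℝ)
    (hf : ∀ z : ℝ, f z =
      Real.exp z * (1 - Real.exp (-(φ + 1) * z)) / (φ + 1)
        - (1 - Real.exp (-φ * z)) / φ)
    (a : ℝ) (ha : a = Real.log K - c) :
    (∫⁻ u in Set.Ioi (0:ℝ),
        (∫⁻ y in Set.Iio (0:ℝ),
          ENNReal.ofReal
            (if a < u + y then Real.exp (φ * y) * (Real.exp (c + u + y) - K) else 0))
        ∂ν)
      = ∫⁻ u in Set.Ioi a, ENNReal.ofReal (K * f (u - a)) ∂ν ∧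
    ∀ u y : ℝ, a < u + y → K < Real.exp (c + u + y) :=
  stmt_15_general ν φ K c hφ hK hc f hf a ha
end

section
/- Let ψ : [−1,∞) → ℝ be continuous and convex with ψ(0) = 0 and ψ(θ) → ∞ as θ → ∞, let α, β, K > 0 and b ≥ 0, and let Φ(q) = sup{θ ≥ 0 : ψ(θ) = q} for q > 0. Then: (a) the map q ↦ K(q − ψ(−1) − β)/(Φ(q)+1) − α/Φ(q) is strictly increasing on (0,∞); (b) for every q > max(β + ψ(−1), 0), with a*(q) = α(Φ(q)+1)/(Φ(q)(q − ψ(−1) − β)), one has Kb²/2 + (α/Φ(q))(K/a*(q) − 1) = Kb²/2 + K(q − ψ(−1) − β)/(Φ(q)+1) − α/Φ(q); (c) consequently, for any q₀ > 0 the set {q ∈ (0, q₀) : 0 < Kb²/2 + (α/Φ(q))(K/a*(q) − 1)} is an interval. -/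
open MeasureTheory Real Set Filter

/-!
Since `ψ` is continuous and tends to `∞`, each level set `{θ ≥ 0 | ψ θ = q}` with `q ≥ ψ 0` is
nonempty, closed and bounded, so `Φ q` is a root of `ψ θ = q`, and by the intermediate value theorem
`Φ` is strictly increasing. Substituting `q = ψ (Φ q)` turns the function in (a) into
`t ↦ K (ψ t - ψ (-1) - β) / (t + 1) - α / t` evaluated at `t = Φ q`; this is strictly increasing
because the chord slope of the convex `ψ` from `-1` is nondecreasing. Part (b) is algebra, and by (b)
the set in (c) is a superlevel set of an increasing function on an interval.
-/

lemma bddAbove_setOf_eq_of_tendsto_atTop {ψ : ℝ → ℝ} (htop : Tendsto ψ atTop atTop) (q : ℝ) :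
    BddAbove {θ | ψ θ = q} := by
  obtain ⟨M, hM⟩ := eventually_atTop.1 (htop.eventually_gt_atTop q)
  refine ⟨M, fun θ hθ => ?_⟩
  by_contra! hMθ
  exact (hM θ hMθ.le).ne' hθ

lemma Set.OrdConnected.setOf_mem_and_lt_of_monotoneOn {α β : Type*} [Preorder α] [Preorder β]
    {s : Set α} {f : α → β} (hs : s.OrdConnected) (hf : MonotoneOn f s) (c : β) :
    {x | x ∈ s ∧ c < f x}.OrdConnected := by
  refine ⟨fun x hx y hy z hz => ⟨hs.out hx.1 hy.1 hz, ?_⟩⟩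
  exact hx.2.trans_le (hf hx.1 (hs.out hx.1 hy.1 hz) hz.1)

/-- The inner quotient is `a*(q)` with `φ = Φ(q)` and `c = q - ψ(-1) - β`; the identity survives the
junk values at `c = 0` and `φ = -1`. -/
lemma div_mul_div_div_sub_one {α φ K c : ℝ} (hα : α ≠ 0) (hφ : φ ≠ 0) :
    α / φ * (K / (α * (φ + 1) / (φ * c)) - 1) = K * c / (φ + 1) - α / φ := by
  rw [div_div_eq_mul_div]
  rcases eq_or_ne c 0 with rfl | hc
  · simp
  rcases eq_or_ne (φ + 1) 0 with h1 | h1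
  · simp [h1]
  field_simp

/-- The paper's `Φ(q)`. -/
noncomputable def largestRoot (ψ : ℝ → ℝ) (q : ℝ) : ℝ := sSup {θ : ℝ | 0 ≤ θ ∧ ψ θ = q}

section LargestRoot

variable {ψ : ℝ → ℝ}

lemma le_largestRoot (htop : Tendsto ψ atTop atTop) {q θ : ℝ} (hθ : 0 ≤ θ) (hψθ : ψ θ = q) :
    θ ≤ largestRoot ψ q :=
  le_csSup ((bddAbove_setOf_eq_of_tendsto_atTop htop q).mono fun _ h => h.2) ⟨hθ, hψθ⟩

lemma exists_root_ge (hcont : ContinuousOn ψ (Ici 0)) (htop : Tendsto ψ atTop atTop) {a q : ℝ}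
    (ha : 0 ≤ a) (hq : ψ a ≤ q) : ∃ θ, a ≤ θ ∧ ψ θ = q :=
  intermediate_value_Ici (hcont.mono (Ici_subset_Ici.2 ha)) htop hq

lemma largestRoot_mem (hcont : ContinuousOn ψ (Ici 0)) (htop : Tendsto ψ atTop atTop) {q : ℝ}
    (hq : ψ 0 ≤ q) : 0 ≤ largestRoot ψ q ∧ ψ (largestRoot ψ q) = q := by
  have hclosed : IsClosed {θ : ℝ | 0 ≤ θ ∧ ψ θ = q} :=
    hcont.preimage_isClosed_of_isClosed isClosed_Ici isClosed_singleton
  exact hclosed.csSup_mem (exists_root_ge hcont htop le_rfl hq)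
    ((bddAbove_setOf_eq_of_tendsto_atTop htop q).mono fun _ h => h.2)

lemma strictMonoOn_largestRoot (hcont : ContinuousOn ψ (Ici 0)) (htop : Tendsto ψ atTop atTop) :
    StrictMonoOn (largestRoot ψ) (Ici (ψ 0)) := by
  intro q₁ hq₁ q₂ hq₂ hlt
  obtain ⟨hpos, hroot⟩ := largestRoot_mem hcont htop hq₁
  obtain ⟨θ, hθ, hψθ⟩ := exists_root_ge hcont htop hpos (hroot.trans_le hlt.le)
  have hle := hθ.trans (le_largestRoot htop (hpos.trans hθ) hψθ)
  refine hle.lt_of_ne fun heq => hlt.ne ?_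
  rw [← hroot, heq, (largestRoot_mem hcont htop hq₂).2]

lemma largestRoot_pos (hcont : ContinuousOn ψ (Ici 0)) (htop : Tendsto ψ atTop atTop)
    (h0 : ψ 0 = 0) {q : ℝ} (hq : 0 < q) : 0 < largestRoot ψ q := by
  obtain ⟨hnonneg, hroot⟩ := largestRoot_mem hcont htop (h0.trans_le hq.le)
  refine hnonneg.lt_of_ne fun heq => hq.ne ?_
  rw [← hroot, ← heq, h0]

end LargestRoot

lemma ConvexOn.strictMonoOn_chord_sub_div {ψ : ℝ → ℝ} (hconv : ConvexOn ℝ (Ici (-1)) ψ) {α β K : ℝ}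
    (hα : 0 < α) (hβ : 0 ≤ β) (hK : 0 ≤ K) :
    StrictMonoOn (fun t => K * (ψ t - ψ (-1) - β) / (t + 1) - α / t) (Ioi 0) := by
  intro s (hs : 0 < s) t (ht : 0 < t) hst
  have hslope : (ψ s - ψ (-1)) / (s + 1) ≤ (ψ t - ψ (-1)) / (t + 1) := by
    simpa only [sub_neg_eq_add] using hconv.secant_mono self_mem_Ici
      (mem_Ici.2 (by linarith)) (mem_Ici.2 (by linarith)) (by linarith) (by linarith) hst.le
  have hβterm : β / (t + 1) ≤ β / (s + 1) := div_le_div_of_nonneg_left hβ (by linarith) (by linarith)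
  have hαterm : α / t < α / s := div_lt_div_of_pos_left hα hs hst
  have hsplit : ∀ u, K * (ψ u - ψ (-1) - β) / (u + 1)
      = K * ((ψ u - ψ (-1)) / (u + 1)) - K * (β / (u + 1)) := fun u => by ring
  simp only [hsplit]
  linarith [mul_le_mul_of_nonneg_left hslope hK, mul_le_mul_of_nonneg_left hβterm hK]

theorem stmt_16_general (ψ : ℝ → ℝ)
    (hcont : ContinuousOn ψ (Set.Ici (-1:ℝ)))
    (hconv : ConvexOn ℝ (Set.Ici (-1:ℝ)) ψ)
    (h0 : ψ 0 = 0)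
    (htop : Tendsto ψ atTop atTop)
    (α β K b : ℝ) (hα : 0 < α) (hβ : 0 < β) (hK : 0 < K)
    (Φ : ℝ → ℝ)
    (hΦ : ∀ q : ℝ, Φ q = sSup {θ : ℝ | 0 ≤ θ ∧ ψ θ = q}) :
    StrictMonoOn (fun q : ℝ => K * (q - ψ (-1) - β) / (Φ q + 1) - α / Φ q)
      (Set.Ioi (0:ℝ)) ∧
    (∀ q : ℝ, max (β + ψ (-1)) 0 < q →
      K * b ^ 2 / 2
          + (α / Φ q) * (K / (α * (Φ q + 1) / (Φ q * (q - ψ (-1) - β))) - 1)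
        = K * b ^ 2 / 2 + K * (q - ψ (-1) - β) / (Φ q + 1) - α / Φ q) ∧
    (∀ q₀ : ℝ, 0 < q₀ →
      ({q : ℝ | q ∈ Set.Ioo 0 q₀ ∧
        0 < K * b ^ 2 / 2
            + (α / Φ q) * (K / (α * (Φ q + 1) / (Φ q * (q - ψ (-1) - β))) - 1)}).OrdConnected) := by
  obtain rfl : Φ = largestRoot ψ := funext hΦ
  have hcont₀ : ContinuousOn ψ (Ici 0) := hcont.mono (Ici_subset_Ici.2 (by norm_num))
  have hpos : ∀ q, 0 < q → 0 < largestRoot ψ q := fun q => largestRoot_pos hcont₀ htop h0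
  have hidentity : ∀ q, 0 < q → K * b ^ 2 / 2 + α / largestRoot ψ q * (K / (α * (largestRoot ψ q + 1)
      / (largestRoot ψ q * (q - ψ (-1) - β))) - 1) = K * b ^ 2 / 2
      + K * (q - ψ (-1) - β) / (largestRoot ψ q + 1) - α / largestRoot ψ q := fun q hq => by
    rw [div_mul_div_div_sub_one hα.ne' (hpos q hq).ne', add_sub_assoc]
  have hmono : StrictMonoOn (fun q => K * (q - ψ (-1) - β) / (largestRoot ψ q + 1)
      - α / largestRoot ψ q) (Ioi 0) := by
    refine ((hconv.strictMonoOn_chord_sub_div hα hβ.le hK.le).comp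
      ((strictMonoOn_largestRoot hcont₀ htop).mono ?_) hpos).congr fun q hq => ?_
    · exact fun q (hq : 0 < q) => (h0.trans_lt hq).le
    · simp only [Function.comp, (largestRoot_mem hcont₀ htop (h0.trans_le (le_of_lt hq))).2]
  refine ⟨hmono, fun q hq => hidentity q ((le_max_right _ _).trans_lt hq), fun q₀ _ => ?_⟩
  refine ordConnected_Ioo.setOf_mem_and_lt_of_monotoneOn ?_ 0
  refine (((hmono.const_add (K * b ^ 2 / 2)).monotoneOn).congr fun q hq => ?_).mono Ioo_subset_Ioi_self
  simp only [hidentity q hq, add_sub_assoc]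

/-- (a) q ↦ K(q − ψ(−1) − β)/(Φ(q)+1) − α/Φ(q) is strictly
increasing on (0,∞); (b) for q > max(β+ψ(−1),0),
Kb²/2 + (α/Φ(q))(K/a*(q) − 1) = Kb²/2 + K(q−ψ(−1)−β)/(Φ(q)+1) − α/Φ(q);
(c) for any q₀ > 0, {q ∈ (0,q₀) : 0 < Kb²/2 + (α/Φ(q))(K/a*(q) − 1)}
is an interval (order-connected). -/
theorem stmt_16 (ψ : ℝ → ℝ)
    (hcont : ContinuousOn ψ (Set.Ici (-1:ℝ)))
    (hconv : ConvexOn ℝ (Set.Ici (-1:ℝ)) ψ)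
    (h0 : ψ 0 = 0)
    (htop : Tendsto ψ atTop atTop)
    (α β K b : ℝ) (hα : 0 < α) (hβ : 0 < β) (hK : 0 < K) (hb : 0 ≤ b)
    (Φ : ℝ → ℝ)
    (hΦ : ∀ q : ℝ, Φ q = sSup {θ : ℝ | 0 ≤ θ ∧ ψ θ = q}) :
    StrictMonoOn (fun q : ℝ => K * (q - ψ (-1) - β) / (Φ q + 1) - α / Φ q)
      (Set.Ioi (0:ℝ)) ∧
    (∀ q : ℝ, max (β + ψ (-1)) 0 < q →
      K * b ^ 2 / 2
          + (α / Φ q) * (K / (α * (Φ q + 1) / (Φ q * (q - ψ (-1) - β))) - 1)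
        = K * b ^ 2 / 2 + K * (q - ψ (-1) - β) / (Φ q + 1) - α / Φ q) ∧
    (∀ q₀ : ℝ, 0 < q₀ →
      ({q : ℝ | q ∈ Set.Ioo 0 q₀ ∧
        0 < K * b ^ 2 / 2
            + (α / Φ q) * (K / (α * (Φ q + 1) / (Φ q * (q - ψ (-1) - β))) - 1)}).OrdConnected) :=
  stmt_16_general ψ hcont hconv h0 htop α β K b hα hβ hK Φ hΦ
end
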